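/- arXiv:1902.04569 — 7 statements merged into one kernel-verified Lean document; each statement's English description precedes it below -/
import Mathlib

section
/- Let Ω be a set, 𝓛_R a closed linear subspace of 𝓛 containing all constant gambles, and 𝒢 ⊆ 𝓛_R. Then N_R(𝒢) is coherent relative to 𝓛_R (i.e. N_R(𝒢) ∩ 𝓛⁻_R = ∅) if and only if N(𝒢) is coherent (i.e. N(𝒢) ∩ 𝓛⁻ = ∅); moreover N_R(𝒢) = 𝓛_R ∩ N(𝒢). -/
/-- `posi A`: the set of all finite nonnegative linear combinations of elements of `A`. -/
def posi {E : Type*} [AddCommMonoid E] [Module ℝ E] (A : Set E) : Set E :=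
  {g | ∃ (k : ℕ) (c : Fin k → ℝ) (f : Fin k → E),
    (∀ i, 0 ≤ c i) ∧ (∀ i, f i ∈ A) ∧ g = ∑ i, c i • f i}

/-- The nonnegative gambles `𝓛⁺ = {g : inf g ≥ 0}`. -/
def Lpos (Ω : Type*) [TopologicalSpace Ω] : Set (BoundedContinuousFunction Ω ℝ) :=
  {g | 0 ≤ ⨅ ω, g ω}

/-- The negative gambles `𝓛⁻ = {g : sup g < 0}`. -/
def Lneg (Ω : Type*) [TopologicalSpace Ω] : Set (BoundedContinuousFunction Ω ℝ) :=
  {g | (⨆ ω, g ω) < 0}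

/-- The natural extension `N(𝒢)`: the closure of `posi(𝓛⁺ ∪ 𝒢)`. -/
def natExt (Ω : Type*) [TopologicalSpace Ω] (G : Set (BoundedContinuousFunction Ω ℝ)) :
    Set (BoundedContinuousFunction Ω ℝ) :=
  closure (posi (Lpos Ω ∪ G))

/-- The relative natural extension `N_R(𝒢)`: the closure of `posi(𝓛⁺_R ∪ 𝒢)`
(since `𝓛_R` is closed in `𝓛`, the closure in `𝓛_R` coincides with the ambient closure). -/
def natExtR (Ω : Type*) [TopologicalSpace Ω] (LR : Submodule ℝ (BoundedContinuousFunction Ω ℝ))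
    (G : Set (BoundedContinuousFunction Ω ℝ)) : Set (BoundedContinuousFunction Ω ℝ) :=
  closure (posi ((Lpos Ω ∩ (LR : Set (BoundedContinuousFunction Ω ℝ))) ∪ G))

section helpers
variable {E : Type*} [AddCommMonoid E] [Module ℝ E]

lemma posi_zero (A : Set E) : (0 : E) ∈ posi A :=
  ⟨0, (fun i => i.elim0), (fun i => i.elim0), fun i => i.elim0, fun i => i.elim0, by simp⟩

lemma posi_mono {A B : Set E} (h : A ⊆ B) : posi A ⊆ posi B := by
  rintro g ⟨k, c, f, hc, hf, rfl⟩
  exact ⟨k, c, f, hc, fun i => h (hf i), rfl⟩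

lemma smul_add_mem_posi {A : Set E} {c : ℝ} {a p : E} (hc : 0 ≤ c) (ha : a ∈ A)
    (hp : p ∈ posi A) : c • a + p ∈ posi A := by
  obtain ⟨k, c', f, hc', hf, rfl⟩ := hp
  refine ⟨k + 1, Fin.cons c c', Fin.cons a f, ?_, ?_, ?_⟩
  · intro i; induction i using Fin.cases <;> simp [hc, hc']
  · intro i; induction i using Fin.cases <;> simp [ha, hf]
  · simp [Fin.sum_univ_succ]

lemma add_mem_posi {A : Set E} {a p : E} (ha : a ∈ A) (hp : p ∈ posi A) :
    a + p ∈ posi A := by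
  have := smul_add_mem_posi zero_le_one ha hp
  simpa using this

lemma posi_union_decomp_aux {A B : Set E} : ∀ (k : ℕ) (c : Fin k → ℝ) (f : Fin k → E),
    (∀ i, 0 ≤ c i) → (∀ i, f i ∈ A ∪ B) →
    ∃ p ∈ posi A, ∃ s ∈ posi B, ∑ i, c i • f i = p + s := by
  intro k
  induction k with
  | zero => exact fun c f _ _ => ⟨0, posi_zero A, 0, posi_zero B, by simp⟩
  | succ n ih =>
    intro c f hc hf
    obtain ⟨p, hp, s, hs, heq⟩ := ih (fun i => c i.succ) (fun i => f i.succ)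
      (fun i => hc i.succ) (fun i => hf i.succ)
    rw [Fin.sum_univ_succ, heq]
    rcases hf 0 with h0 | h0
    · exact ⟨c 0 • f 0 + p, smul_add_mem_posi (hc 0) h0 hp, s, hs, by rw [add_assoc]⟩
    · exact ⟨p, hp, c 0 • f 0 + s, smul_add_mem_posi (hc 0) h0 hs, by rw [add_left_comm]⟩

lemma posi_union_decomp {A B : Set E} {h : E} (hh : h ∈ posi (A ∪ B)) :
    ∃ p ∈ posi A, ∃ s ∈ posi B, h = p + s := by
  obtain ⟨k, c, f, hc, hf, rfl⟩ := hh
  exact posi_union_decomp_aux k c f hc hf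

lemma posi_subset_submodule {A : Set E} {M : Submodule ℝ E} (h : A ⊆ M) :
    posi A ⊆ M := by
  rintro g ⟨k, c, f, hc, hf, rfl⟩
  exact Submodule.sum_mem M (fun i _ => Submodule.smul_mem M _ (h (hf i)))

end helpers

lemma Lpos_iff {Ω : Type*} [TopologicalSpace Ω] (g : BoundedContinuousFunction Ω ℝ) :
    g ∈ Lpos Ω ↔ ∀ ω, 0 ≤ g ω := by
  rcases isEmpty_or_nonempty Ω with h | h
  · simp [Lpos, Real.iInf_of_isEmpty]
  · exact le_ciInf_iff (g.isBounded_range.bddBelow)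

lemma posi_Lpos_nonneg {Ω : Type*} [TopologicalSpace Ω]
    {g : BoundedContinuousFunction Ω ℝ} (hg : g ∈ posi (Lpos Ω)) (ω : Ω) : 0 ≤ g ω := by
  obtain ⟨k, c, f, hc, hf, rfl⟩ := hg
  have : (∑ i, c i • f i) ω = ∑ i, c i * f i ω := by simp
  rw [this]
  exact Finset.sum_nonneg fun i _ => mul_nonneg (hc i) ((Lpos_iff _).1 (hf i) ω)

lemma nonempty_of_Lneg {Ω : Type*} [TopologicalSpace Ω]
    {g : BoundedContinuousFunction Ω ℝ} (hg : g ∈ Lneg Ω) : Nonempty Ω := by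
  by_contra h
  have : IsEmpty Ω := not_nonempty_iff.mp h
  simp [Lneg, Real.iSup_of_isEmpty] at hg


/-- for a closed linear subspace `𝓛_R` of `𝓛` containing all constant
gambles and `𝒢 ⊆ 𝓛_R`, `N_R(𝒢)` is coherent relative to `𝓛_R` iff `N(𝒢)` is coherent,
and moreover `N_R(𝒢) = 𝓛_R ∩ N(𝒢)`. -/
theorem statement1 (Ω : Type*) [TopologicalSpace Ω] [DiscreteTopology Ω]
    (LR : Submodule ℝ (BoundedContinuousFunction Ω ℝ))
    (hLRclosed : IsClosed (LR : Set (BoundedContinuousFunction Ω ℝ)))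
    (hLRconst : ∀ c : ℝ, BoundedContinuousFunction.const Ω c ∈ LR)
    (G : Set (BoundedContinuousFunction Ω ℝ))
    (hG : G ⊆ (LR : Set (BoundedContinuousFunction Ω ℝ))) :
    (natExtR Ω LR G ∩ (Lneg Ω ∩ (LR : Set (BoundedContinuousFunction Ω ℝ))) = ∅ ↔
      natExt Ω G ∩ Lneg Ω = ∅) ∧
    natExtR Ω LR G = (LR : Set (BoundedContinuousFunction Ω ℝ)) ∩ natExt Ω G := by
  have hsub1 : natExtR Ω LR G ⊆ (LR : Set (BoundedContinuousFunction Ω ℝ)) ∩ natExt Ω G := by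
    refine Set.subset_inter ?_ ?_
    · exact closure_minimal
        (posi_subset_submodule (Set.union_subset (Set.inter_subset_right) hG)) hLRclosed
    · exact closure_mono (posi_mono (Set.union_subset_union_left G Set.inter_subset_left))
  have hsub2 : (LR : Set (BoundedContinuousFunction Ω ℝ)) ∩ natExt Ω G ⊆ natExtR Ω LR G := by
    rintro g ⟨hgLR, hgN⟩
    rw [natExtR, Metric.mem_closure_iff]
    intro ε hε
    rw [natExt, Metric.mem_closure_iff] at hgN
    obtain ⟨h, hh, hdist⟩ := hgN (ε/2) (by linarith)
    obtain ⟨p, hp, s, hs, rfl⟩ := posi_union_decomp hh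
    have hsLR : s ∈ (LR : Set (BoundedContinuousFunction Ω ℝ)) := posi_subset_submodule hG hs
    have hterm : g - s + BoundedContinuousFunction.const Ω (ε/2) ∈
        Lpos Ω ∩ (LR : Set (BoundedContinuousFunction Ω ℝ)) := by
      constructor
      · rw [Lpos_iff]
        intro ω
        have h1 : dist (g ω) ((p + s) ω) ≤ dist g (p + s) :=
          BoundedContinuousFunction.dist_coe_le_dist ω
        have h2 : |g ω - (p ω + s ω)| < ε/2 := by
          rw [← Real.dist_eq]
          simp only [BoundedContinuousFunction.coe_add, Pi.add_apply] at h1 ⊢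
          linarith
        have h3 := posi_Lpos_nonneg hp ω
        have h4 := (abs_lt.1 h2).1
        simp only [BoundedContinuousFunction.coe_add, BoundedContinuousFunction.coe_sub,
          Pi.add_apply, Pi.sub_apply, BoundedContinuousFunction.const_apply]
        linarith
      · exact LR.add_mem (LR.sub_mem hgLR hsLR) (hLRconst _)
    refine ⟨g + BoundedContinuousFunction.const Ω (ε/2), ?_, ?_⟩
    · have heq : g + BoundedContinuousFunction.const Ω (ε/2) =
          (g - s + BoundedContinuousFunction.const Ω (ε/2)) + s := by abel
      rw [heq]
      exact add_mem_posi (Or.inl hterm) (posi_mono Set.subset_union_right hs)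
    · have : dist g (g + BoundedContinuousFunction.const Ω (ε/2)) =
          ‖BoundedContinuousFunction.const Ω (ε/2)‖ := dist_self_add_right _ g
      rw [this]
      have hb : ‖BoundedContinuousFunction.const Ω (ε/2)‖ ≤ ε/2 := by
        apply BoundedContinuousFunction.norm_le (by linarith) |>.2
        intro x
        rw [Real.norm_eq_abs, BoundedContinuousFunction.const_apply, abs_of_nonneg (by linarith)]
      linarith
  have heq : natExtR Ω LR G = (LR : Set (BoundedContinuousFunction Ω ℝ)) ∩ natExt Ω G :=
    Set.Subset.antisymm hsub1 hsub2
  refine ⟨⟨?_, ?_⟩, heq⟩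
  · intro hR
    rw [Set.eq_empty_iff_forall_notMem]
    rintro g ⟨hgN, hgneg⟩
    have hne : Nonempty Ω := nonempty_of_Lneg hgneg
    set M : ℝ := ⨆ ω, g ω with hM
    have hε : 0 < -M := neg_pos.mpr hgneg
    rw [natExt, Metric.mem_closure_iff] at hgN
    obtain ⟨h, hh, hdist⟩ := hgN (-M) hε
    obtain ⟨p, hp, s, hs, rfl⟩ := posi_union_decomp hh
    have hsLR : s ∈ (LR : Set (BoundedContinuousFunction Ω ℝ)) := posi_subset_submodule hG hs
    have hsR : s ∈ natExtR Ω LR G :=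
      subset_closure (posi_mono Set.subset_union_right hs)
    have hsneg : s ∈ Lneg Ω := by
      have hle : ∀ ω, s ω ≤ M + dist g (p + s) := by
        intro ω
        have h1 : dist (g ω) ((p + s) ω) ≤ dist g (p + s) :=
          BoundedContinuousFunction.dist_coe_le_dist ω
        have h2 : |g ω - (p ω + s ω)| ≤ dist g (p + s) := by
          rw [← Real.dist_eq]
          simpa using h1
        have h3 := posi_Lpos_nonneg hp ω
        have h4 : g ω ≤ M := le_ciSup (g.isBounded_range.bddAbove) ω
        have h5 := (abs_le.1 h2).1
        linarith
      have : (⨆ ω, s ω) ≤ M + dist g (p + s) := ciSup_le hle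
      have : (⨆ ω, s ω) < 0 := by linarith
      exact this
    exact Set.eq_empty_iff_forall_notMem.1 hR s ⟨hsR, hsneg, hsLR⟩
  · intro hN
    rw [Set.eq_empty_iff_forall_notMem]
    rintro g ⟨hgR, hgneg, hgLR⟩
    have : g ∈ natExt Ω G := (hsub1 hgR).2
    exact Set.eq_empty_iff_forall_notMem.1 hN g ⟨this, hgneg⟩
end

section
/- Let E be a real normed vector space, 𝟙 ∈ E a nonzero element, and Σ⁺ ⊆ E a closed convex cone with 𝟙 ∈ Σ⁺ such that Σ⁻ := interior(−Σ⁺) is nonempty, and assume condition (*): for every f ∈ E there is ε > 0 with f + ε𝟙 ∈ Σ⁺. Then for every 𝒢 ⊆ E, N_B(𝒢) is P-coherent (N_B(𝒢) ∩ Σ⁻ = ∅) if and only if N_B(𝒢) ≠ E. -/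
lemma posi_mem {E : Type*} [AddCommMonoid E] [Module ℝ E] {A : Set E} {a : E}
    (ha : a ∈ A) : a ∈ posi A := by
  refine ⟨1, fun _ => 1, fun _ => a, fun _ => zero_le_one, fun _ => ha, by simp⟩

lemma posi_add {E : Type*} [AddCommMonoid E] [Module ℝ E] {A : Set E} {a b : E}
    (ha : a ∈ posi A) (hb : b ∈ posi A) : a + b ∈ posi A := by
  obtain ⟨k, c, f, hc, hf, rfl⟩ := ha
  obtain ⟨m, d, g, hd, hg, rfl⟩ := hb
  refine ⟨k + m, Fin.append c d, Fin.append f g, ?_, ?_, ?_⟩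
  · intro i
    induction i using Fin.addCases with
    | left i => simpa [Fin.append_left] using hc i
    | right i => simpa [Fin.append_right] using hd i
  · intro i
    induction i using Fin.addCases with
    | left i => simpa [Fin.append_left] using hf i
    | right i => simpa [Fin.append_right] using hg i
  · rw [Fin.sum_univ_add]
    simp [Fin.append_left, Fin.append_right]

lemma posi_smul {E : Type*} [AddCommMonoid E] [Module ℝ E] {A : Set E} {a : E}
    {t : ℝ} (ht : 0 ≤ t) (ha : a ∈ posi A) : t • a ∈ posi A := by
  obtain ⟨k, c, f, hc, hf, rfl⟩ := ha
  refine ⟨k, fun i => t * c i, f, fun i => mul_nonneg ht (hc i), hf, ?_⟩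
  rw [Finset.smul_sum]
  simp [smul_smul]

/-- under condition (*) (for every `f` there is `ε > 0` with
`f + ε𝟙 ∈ Σ⁺`), the set `N_B(𝒢) = closure (posi (Σ⁺ ∪ 𝒢))` is P-coherent
(i.e. disjoint from `Σ⁻ = interior (−Σ⁺)`) iff `N_B(𝒢) ≠ E`. -/
theorem statement3 {E : Type*} [NormedAddCommGroup E] [NormedSpace ℝ E]
    (one : E) (hone : one ≠ 0)
    (Sp : Set E) (hclosed : IsClosed Sp) (hconvex : Convex ℝ Sp)
    (hcone : ∀ c : ℝ, 0 ≤ c → ∀ x ∈ Sp, c • x ∈ Sp)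
    (honeMem : one ∈ Sp)
    (hSm : (interior (-Sp)).Nonempty)
    (hstar : ∀ f : E, ∃ ε : ℝ, 0 < ε ∧ f + ε • one ∈ Sp)
    (G : Set E) :
    closure (posi (Sp ∪ G)) ∩ interior (-Sp) = ∅ ↔
      closure (posi (Sp ∪ G)) ≠ Set.univ := by
  constructor
  · intro hdis huniv
    obtain ⟨x, hx⟩ := hSm
    have hxN : x ∈ closure (posi (Sp ∪ G)) := huniv ▸ Set.mem_univ x
    exact Set.eq_empty_iff_forall_notMem.mp hdis x ⟨hxN, hx⟩
  · intro hne
    by_contra h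
    obtain ⟨x, hxN, hxS⟩ := Set.inter_nonempty.mp (Set.nonempty_iff_ne_empty.mpr h)
    apply hne
    apply Set.eq_univ_of_forall
    intro f
    obtain ⟨δ, hδ, hball0⟩ := Metric.mem_nhds_iff.mp (mem_interior_iff_mem_nhds.mp hxS)
    have hball : Metric.ball (-x) δ ⊆ Sp := by
      intro z hz
      have hz' : -z ∈ Metric.ball x δ := by
        rw [Metric.mem_ball, dist_eq_norm] at hz ⊢
        rw [show -z - x = -(z - -x) by abel, norm_neg]
        exact hz
      simpa using hball0 hz'
    obtain ⟨y, hy, hdy⟩ := Metric.mem_closure_iff.mp hxN (δ / 2) (by positivity)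
    set t : ℝ := 2 * (‖f‖ + 1) / δ with ht_def
    have ht : 0 < t := by positivity
    have key : (1 / t) • f - y ∈ Sp := by
      apply hball
      rw [Metric.mem_ball, dist_eq_norm]
      have heq : (1 / t) • f - y - (-x) = (1 / t) • f + (x - y) := by abel
      have hnf : ‖(1 / t) • f‖ < δ / 2 := by
        rw [norm_smul, norm_div, norm_one, Real.norm_eq_abs, abs_of_pos ht, ht_def]
        rw [div_mul_eq_mul_div, one_mul, div_div_eq_mul_div, div_lt_iff₀ (by positivity)]
        nlinarith [norm_nonneg f, hδ]
      calc ‖(1 / t) • f - y - (-x)‖ ≤ ‖(1 / t) • f‖ + ‖x - y‖ := by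
            rw [heq]; exact norm_add_le _ _
        _ < δ / 2 + δ / 2 := by
            have : ‖x - y‖ = dist x y := by rw [dist_eq_norm]
            rw [this]; exact add_lt_add hnf hdy
        _ = δ := by ring
    have hfey : f = t • ((1 / t) • f - y) + t • y := by
      rw [smul_sub, smul_smul]
      field_simp
      rw [one_smul, sub_add_cancel]
    have h1 : t • ((1 / t) • f - y) ∈ posi (Sp ∪ G) :=
      posi_mem (Set.mem_union_left _ (hcone t ht.le _ key))
    have h2 : t • y ∈ posi (Sp ∪ G) := posi_smul ht.le hy
    exact subset_closure (hfey ▸ posi_add h1 h2)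
end

section
/- Fix n ≥ 1 and let Herm(n) be the real vector space of n×n complex Hermitian matrices. Call a set 𝒞 ⊆ Herm(n) a coherent matrix cone if 𝒞 is a closed convex cone containing every positive semidefinite Hermitian matrix and containing no negative definite Hermitian matrix. Then the map 𝒞 ↦ {ρ : ρ Hermitian, positive semidefinite, Tr(ρ) = 1, and Re Tr(Gρ) ≥ 0 for every G ∈ 𝒞} is a bijection from the collection of coherent matrix cones in Herm(n) onto the collection of nonempty closed convex subsets of the set of n×n density matrices. -/
open Matrix ComplexOrder

/-- A coherent matrix cone: a closed convex cone of Hermitian matrices containing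
all PSD matrices and no negative definite matrix. -/
def CoherentMatrixCone (n : ℕ) (C : Set (Matrix (Fin n) (Fin n) ℂ)) : Prop :=
  (∀ G ∈ C, G.IsHermitian) ∧ IsClosed C ∧ Convex ℝ C ∧
  (∀ c : ℝ, 0 ≤ c → ∀ G ∈ C, c • G ∈ C) ∧
  (∀ G : Matrix (Fin n) (Fin n) ℂ, G.PosSemidef → G ∈ C) ∧
  (∀ G : Matrix (Fin n) (Fin n) ℂ, (-G).PosDef → G ∉ C)

/-- The dual map: a cone of gambles is sent to the set of density matrices giving
nonnegative expectation to each of its members. -/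
def dualMap (n : ℕ) (C : Set (Matrix (Fin n) (Fin n) ℂ)) : Set (Matrix (Fin n) (Fin n) ℂ) :=
  {ρ | ρ.PosSemidef ∧ ρ.trace = 1 ∧ ∀ G ∈ C, 0 ≤ ((G * ρ).trace).re}

attribute [local instance] InnerProductSpace.complexToReal


section Facts

variable {n : ℕ}

open scoped MatrixOrder in
noncomputable def Matrix.PosSemidef.sqrt {A : Matrix (Fin n) (Fin n) ℂ} (_hA : A.PosSemidef) :
    Matrix (Fin n) (Fin n) ℂ :=
  CFC.sqrt A

open scoped MatrixOrder in
lemma Matrix.PosSemidef.posSemidef_sqrt {A : Matrix (Fin n) (Fin n) ℂ} (hA : A.PosSemidef) :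
    hA.sqrt.PosSemidef :=
  Matrix.nonneg_iff_posSemidef.mp (CFC.sqrt_nonneg A)

open scoped MatrixOrder in
lemma Matrix.PosSemidef.sqrt_mul_self {A : Matrix (Fin n) (Fin n) ℂ} (hA : A.PosSemidef) :
    hA.sqrt * hA.sqrt = A :=
  CFC.sqrt_mul_sqrt_self A (Matrix.nonneg_iff_posSemidef.mpr hA)

lemma psd_exists_conjTranspose_mul_self {A : Matrix (Fin n) (Fin n) ℂ} (hA : A.PosSemidef) :
    ∃ B : Matrix (Fin n) (Fin n) ℂ, A = Bᴴ * B :=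
  ⟨hA.sqrt, by rw [hA.posSemidef_sqrt.1.eq, hA.sqrt_mul_self]⟩

lemma herm_dot_self_star {Z : Matrix (Fin n) (Fin n) ℂ} (hZ : Z.IsHermitian) (x : Fin n → ℂ) :
    star (star x ⬝ᵥ Z *ᵥ x) = star x ⬝ᵥ Z *ᵥ x := by
  conv_lhs => rw [star_dotProduct, star_star, star_mulVec, ← dotProduct_mulVec, hZ.eq]

lemma trace_mul_vecMulVec (Z : Matrix (Fin n) (Fin n) ℂ) (x : Fin n → ℂ) :
    (Z * vecMulVec x (star x)).trace = star x ⬝ᵥ Z *ᵥ x := by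
  simp only [Matrix.trace, Matrix.diag, Matrix.mul_apply, vecMulVec_apply, dotProduct, mulVec,
    dotProduct, Pi.star_apply, Finset.mul_sum]
  apply Finset.sum_congr rfl; intro a _
  apply Finset.sum_congr rfl; intro b _
  ring

lemma posSemidef_vecMulVec (x : Fin n → ℂ) : (vecMulVec x (star x)).PosSemidef := by
  apply Matrix.PosSemidef.of_dotProduct_mulVec_nonneg
  · ext i j
    simp [conjTranspose_apply, vecMulVec_apply, mul_comm]
  · intro y
    have h1 : (vecMulVec x (star x)) *ᵥ y = (star x ⬝ᵥ y) • x := by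
      ext i
      simp [mulVec, vecMulVec_apply, dotProduct, Finset.mul_sum, mul_comm, mul_left_comm]
    have h2 : star y ⬝ᵥ x = star (star x ⬝ᵥ y) := by
      rw [star_dotProduct]
    rw [h1, dotProduct_smul, smul_eq_mul, h2]
    exact mul_star_self_nonneg _

/-- If `Z` is Hermitian and `Re Tr(X Z) ≥ 0` for all PSD `X`, then `Z` is PSD. -/
lemma posSemidef_of_trace_pairing {Z : Matrix (Fin n) (Fin n) ℂ} (hZ : Z.IsHermitian)
    (h : ∀ X : Matrix (Fin n) (Fin n) ℂ, X.PosSemidef → 0 ≤ ((X * Z).trace).re) :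
    Z.PosSemidef := by
  refine Matrix.PosSemidef.of_dotProduct_mulVec_nonneg hZ fun x => ?_
  have h1 := h _ (posSemidef_vecMulVec x)
  rw [trace_mul_comm, trace_mul_vecMulVec] at h1
  have h2 := herm_dot_self_star hZ x
  rw [Complex.le_def]
  refine ⟨by simpa using h1, ?_⟩
  have := congrArg Complex.im h2
  simp only [Complex.star_def, Complex.conj_im] at this
  simp only [Complex.zero_im]
  linarith

lemma psd_trace_nonneg {M : Matrix (Fin n) (Fin n) ℂ} (hM : M.PosSemidef) :
    0 ≤ M.trace := by
  have : ∀ i, 0 ≤ M i i := by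
    intro i
    have := hM.dotProduct_mulVec_nonneg (Pi.single i 1)
    simpa [dotProduct, mulVec, Pi.single_apply] using this
  exact Finset.sum_nonneg fun i _ => this i

lemma psd_trace_re_nonneg {M : Matrix (Fin n) (Fin n) ℂ} (hM : M.PosSemidef) :
    0 ≤ (M.trace).re :=
  (Complex.le_def.mp (psd_trace_nonneg hM)).1

lemma psd_trace_im_zero {M : Matrix (Fin n) (Fin n) ℂ} (hM : M.PosSemidef) :
    (M.trace).im = 0 :=
  ((Complex.le_def.mp (psd_trace_nonneg hM)).2).symm

lemma psd_eq_zero_of_trace_eq_zero {M : Matrix (Fin n) (Fin n) ℂ} (hM : M.PosSemidef)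
    (h : M.trace = 0) : M = 0 := by
  obtain ⟨B, rfl⟩ := psd_exists_conjTranspose_mul_self hM
  have htr : (Bᴴ * B).trace = ∑ i : Fin n, ∑ j : Fin n, (starRingEnd ℂ) (B j i) * B j i := by
    simp [Matrix.trace, Matrix.diag, Matrix.mul_apply, Matrix.conjTranspose_apply]
  have hre : ∑ i : Fin n, ∑ j : Fin n, Complex.normSq (B j i) = 0 := by
    have h5 := congrArg Complex.re (htr.symm.trans h)
    simp only [Complex.re_sum, Complex.zero_re] at h5
    rw [← h5]
    apply Finset.sum_congr rfl; intro a _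
    apply Finset.sum_congr rfl; intro b _
    simp [Complex.normSq_apply, Complex.mul_re]
  have hB : B = 0 := by
    ext j i
    have h1 : ∀ i ∈ Finset.univ, (0:ℝ) ≤ ∑ j : Fin n, Complex.normSq (B j i) :=
      fun i _ => Finset.sum_nonneg fun j _ => Complex.normSq_nonneg _
    have h2 := (Finset.sum_eq_zero_iff_of_nonneg h1).mp hre i (Finset.mem_univ i)
    have h3 := (Finset.sum_eq_zero_iff_of_nonneg
      (fun j _ => Complex.normSq_nonneg (B j i))).mp h2 j (Finset.mem_univ j)
    simpa using Complex.normSq_eq_zero.mp h3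
  rw [hB]; simp

end Facts

section Closedness

variable {n : ℕ}


lemma isClosed_complex_nonneg : IsClosed {z : ℂ | 0 ≤ z} := by
  have : {z : ℂ | 0 ≤ z} = {z : ℂ | 0 ≤ z.re} ∩ {z : ℂ | z.im = 0} := by
    ext z; simp [Complex.le_def, eq_comm]
  rw [this]
  exact (isClosed_le continuous_const Complex.continuous_re).inter
    (isClosed_eq Complex.continuous_im continuous_const)

lemma isClosed_isHermitian : IsClosed {A : Matrix (Fin n) (Fin n) ℂ | A.IsHermitian} :=
  isClosed_eq (continuous_id.matrix_conjTranspose) continuous_id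

lemma isClosed_posSemidef : IsClosed {A : Matrix (Fin n) (Fin n) ℂ | A.PosSemidef} := by
  have : {A : Matrix (Fin n) (Fin n) ℂ | A.PosSemidef} =
      {A : Matrix (Fin n) (Fin n) ℂ | A.IsHermitian} ∩
      ⋂ x : Fin n → ℂ, {A : Matrix (Fin n) (Fin n) ℂ | 0 ≤ star x ⬝ᵥ A *ᵥ x} := by
    ext A
    simp only [Set.mem_setOf_eq, Set.mem_inter_iff, Set.mem_iInter, Matrix.posSemidef_iff_dotProduct_mulVec]
  rw [this]
  refine isClosed_isHermitian.inter (isClosed_iInter fun x => ?_)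
  exact IsClosed.preimage ((continuous_const).dotProduct
    (continuous_id.matrix_mulVec continuous_const)) isClosed_complex_nonneg

end Closedness

section Facts2

variable {n : ℕ}

lemma trace_psd_mul_psd_nonneg {A B : Matrix (Fin n) (Fin n) ℂ}
    (hA : A.PosSemidef) (hB : B.PosSemidef) : 0 ≤ ((A * B).trace).re := by
  have hs := hB.posSemidef_sqrt
  have key : A * B = A * hB.sqrt * hB.sqrt := by
    rw [Matrix.mul_assoc, hB.sqrt_mul_self]
  have h2 : (A * hB.sqrt * hB.sqrt).trace = (hB.sqrt * A * hB.sqrt).trace := by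
    rw [trace_mul_cycle]
  have h3 : (hB.sqrt * A * hB.sqrt).PosSemidef := by
    have := hA.conjTranspose_mul_mul_same hB.sqrt
    rwa [hs.1.eq] at this
  rw [key, h2]
  exact (Complex.le_def.mp (Finset.sum_nonneg fun i _ => by
    have := h3.dotProduct_mulVec_nonneg (Pi.single i 1)
    simpa [dotProduct, mulVec, Pi.single_apply] using this)).1

lemma trace_posdef_mul_psd_pos {A B : Matrix (Fin n) (Fin n) ℂ}
    (hA : A.PosDef) (hB : B.PosSemidef) (hB0 : B ≠ 0) : 0 < ((A * B).trace).re := by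
  have hs := hB.posSemidef_sqrt
  have key : (A * B).trace = (hB.sqrt * A * hB.sqrt).trace := by
    conv_lhs => rw [← hB.sqrt_mul_self]
    rw [← Matrix.mul_assoc, trace_mul_cycle]
  have h3 : (hB.sqrt * A * hB.sqrt).PosSemidef := by
    have := hA.posSemidef.conjTranspose_mul_mul_same hB.sqrt
    rwa [hs.1.eq] at this
  have hMne : hB.sqrt * A * hB.sqrt ≠ 0 := by
    intro hM0
    apply hB0
    have hsq0 : hB.sqrt = 0 := by
      by_contra hsne
      -- find x with sqrt *ᵥ x ≠ 0
      have : ∃ x, hB.sqrt *ᵥ x ≠ 0 := by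
        by_contra hall
        push_neg at hall
        apply hsne
        ext i j
        have := congrFun (hall (Pi.single j 1)) i
        simpa [mulVec, dotProduct, Pi.single_apply] using this
      obtain ⟨x, hx⟩ := this
      have hz : star x ⬝ᵥ (hB.sqrt * A * hB.sqrt) *ᵥ x = 0 := by rw [hM0]; simp
      have hrw : star x ⬝ᵥ (hB.sqrt * A * hB.sqrt) *ᵥ x
          = star (hB.sqrt *ᵥ x) ⬝ᵥ A *ᵥ (hB.sqrt *ᵥ x) := by
        rw [star_mulVec, ← Matrix.mulVec_mulVec, dotProduct_mulVec, ← Matrix.vecMul_vecMul,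
          hs.1.eq]
        rw [dotProduct_mulVec, dotProduct_mulVec, dotProduct_mulVec]
      exact hx <| by
        by_contra hne
        have := hA.dotProduct_mulVec_pos hne
        rw [← hrw, hz] at this
        exact lt_irrefl 0 this
    rw [← hB.sqrt_mul_self, hsq0]
    simp
  have htr : (hB.sqrt * A * hB.sqrt).trace ≠ 0 := fun h0 =>
    hMne (psd_eq_zero_of_trace_eq_zero h3 h0)
  have hge := psd_trace_re_nonneg h3
  have him := psd_trace_im_zero h3
  rw [key]
  rcases lt_or_eq_of_le hge with h | h
  · exact h
  · exfalso; exact htr (Complex.ext (by simp [← h]) (by simp [him]))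

end Facts2

section Phi

variable {n : ℕ}

noncomputable def phi (n : ℕ) :
    Matrix (Fin n) (Fin n) ℂ ≃L[ℝ] EuclideanSpace ℂ (Fin n × Fin n) where
  toLinearEquiv :=
  { toFun := fun A => (WithLp.equiv 2 _).symm (fun p => A p.1 p.2)
    invFun := fun y => Matrix.of fun i j => y (i, j)
    map_add' := fun A B => rfl
    map_smul' := fun c A => rfl
    left_inv := fun A => rfl
    right_inv := fun y => rfl }
  continuous_toFun := by
    show Continuous fun A : Matrix (Fin n) (Fin n) ℂ =>
      (WithLp.equiv 2 ((Fin n × Fin n) → ℂ)).symm fun p => A p.1 p.2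
    exact ((PiLp.continuousLinearEquiv 2 ℂ (fun _ : Fin n × Fin n => ℂ)).symm).continuous.comp
      (continuous_pi fun p => (continuous_apply p.2).comp (continuous_apply p.1))
  continuous_invFun := by
    show Continuous fun y : EuclideanSpace ℂ (Fin n × Fin n) =>
      Matrix.of fun i j => y (i, j)
    have h1 : Continuous fun y : (Fin n × Fin n) → ℂ =>
        Matrix.of fun i j => y (i, j) :=
      continuous_pi fun i => continuous_pi fun j => continuous_apply (i, j)
    exact h1.comp (PiLp.continuousLinearEquiv 2 ℂ (fun _ : Fin n × Fin n => ℂ)).continuous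

@[simp] lemma phi_apply (A : Matrix (Fin n) (Fin n) ℂ) (p : Fin n × Fin n) :
    phi n A p = A p.1 p.2 := rfl

open scoped RealInnerProductSpace in
lemma phi_inner (A B : Matrix (Fin n) (Fin n) ℂ) :
    ⟪phi n A, phi n B⟫ = ((Aᴴ * B).trace).re := by
  have h1 : ⟪phi n A, phi n B⟫ = Complex.re (inner (𝕜 := ℂ) (phi n A) (phi n B)) := rfl
  have h2 : (inner (𝕜 := ℂ) (phi n A) (phi n B)) = (Aᴴ * B).trace := by
    rw [PiLp.inner_apply]
    have h3 : (Aᴴ * B).trace = ∑ i : Fin n, ∑ j : Fin n, star (A j i) * B j i := by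
      simp only [Matrix.trace, Matrix.diag, Matrix.mul_apply, Matrix.conjTranspose_apply]
    rw [h3, Finset.sum_comm, Fintype.sum_prod_type]
    apply Finset.sum_congr rfl
    intro a _
    apply Finset.sum_congr rfl
    intro b _
    simp [mul_comm]
  rw [h1, h2]

end Phi

section Pairing

variable {n : ℕ}

open scoped RealInnerProductSpace

/-- The Hermitian part of a matrix. -/
noncomputable def hpart (Y : Matrix (Fin n) (Fin n) ℂ) : Matrix (Fin n) (Fin n) ℂ :=
  (2 : ℝ)⁻¹ • (Y + Yᴴ)

lemma hpart_isHermitian (Y : Matrix (Fin n) (Fin n) ℂ) : (hpart Y).IsHermitian := by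
  unfold hpart
  unfold Matrix.IsHermitian
  rw [Matrix.conjTranspose_smul, Matrix.conjTranspose_add, Matrix.conjTranspose_conjTranspose]
  rw [star_trivial, add_comm]

/-- Pairing a Hermitian matrix with any matrix only sees the Hermitian part. -/
lemma trace_herm_mul_hpart {A : Matrix (Fin n) (Fin n) ℂ} (hA : A.IsHermitian)
    (Y : Matrix (Fin n) (Fin n) ℂ) :
    ((A * hpart Y).trace).re = ((A * Y).trace).re := by
  have key : ((A * Yᴴ).trace).re = ((A * Y).trace).re := by
    have h1 : (A * Yᴴ).trace = star ((Y * Aᴴ).trace) := by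
      rw [← trace_conjTranspose, Matrix.conjTranspose_mul, Matrix.conjTranspose_conjTranspose]
    rw [h1, hA.eq, trace_mul_comm]
    simp [Complex.star_def]
  unfold hpart
  rw [Matrix.mul_smul, Matrix.trace_smul, Complex.smul_re, Matrix.mul_add, Matrix.trace_add,
    Complex.add_re, key]
  simp only [smul_eq_mul]
  ring

lemma phi_inner_herm {A : Matrix (Fin n) (Fin n) ℂ} (hA : A.IsHermitian)
    (Y : Matrix (Fin n) (Fin n) ℂ) :
    ⟪phi n A, phi n Y⟫ = ((A * hpart Y).trace).re := by
  rw [phi_inner, hA.eq, trace_herm_mul_hpart hA]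

end Pairing

section Witness

variable {n : ℕ}

open scoped RealInnerProductSpace

/-- The image of a coherent cone under `phi`, as a convex cone. -/
noncomputable def coneOf (n : ℕ) (C : Set (Matrix (Fin n) (Fin n) ℂ))
    (hC : CoherentMatrixCone n C) : ConvexCone ℝ (EuclideanSpace ℂ (Fin n × Fin n)) where
  carrier := phi n '' C
  smul_mem' := by
    rintro c hc x ⟨A, hA, rfl⟩
    exact ⟨c • A, hC.2.2.2.1 c hc.le A hA, map_smul _ _ _⟩
  add_mem' := by
    rintro x ⟨A, hA, rfl⟩ y ⟨B, hB, rfl⟩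
    refine ⟨A + B, ?_, map_add _ _ _⟩
    have h1 : (2:ℝ)⁻¹ • A + (2:ℝ)⁻¹ • B ∈ C := by
      have := hC.2.2.1 hA hB (by norm_num : (0:ℝ) ≤ 2⁻¹) (by norm_num : (0:ℝ) ≤ 2⁻¹)
        (by norm_num)
      exact this
    have h2 := hC.2.2.2.1 2 (by norm_num) _ h1
    rwa [smul_add, smul_inv_smul₀ (by norm_num : (2:ℝ) ≠ 0),
      smul_inv_smul₀ (by norm_num : (2:ℝ) ≠ 0)] at h2

lemma witness {C : Set (Matrix (Fin n) (Fin n) ℂ)} (hC : CoherentMatrixCone n C)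
    {b : Matrix (Fin n) (Fin n) ℂ} (hb : b ∉ C) (hbH : b.IsHermitian) :
    ∃ Z : Matrix (Fin n) (Fin n) ℂ, Z.PosSemidef ∧
      (∀ G ∈ C, 0 ≤ ((G * Z).trace).re) ∧ ((b * Z).trace).re < 0 := by
  obtain ⟨hHerm, hClosed, hConv, hCone, hPSD, hNeg⟩ := hC
  have hne : ((coneOf n C ⟨hHerm, hClosed, hConv, hCone, hPSD, hNeg⟩ : ConvexCone ℝ _) :
      Set (EuclideanSpace ℂ (Fin n × Fin n))).Nonempty :=
    ⟨phi n 0, 0, hPSD 0 Matrix.PosSemidef.zero, rfl⟩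
  have hcl : IsClosed ((coneOf n C ⟨hHerm, hClosed, hConv, hCone, hPSD, hNeg⟩ : ConvexCone ℝ _) :
      Set (EuclideanSpace ℂ (Fin n × Fin n))) := by
    have : (phi n '' C) = (phi n).symm ⁻¹' C := by
      ext y
      constructor
      · rintro ⟨A, hA, rfl⟩; simpa using hA
      · intro hy; exact ⟨(phi n).symm y, hy, by simp⟩
    show IsClosed (phi n '' C)
    rw [this]
    exact hClosed.preimage (phi n).symm.continuous
  have hbmem : phi n b ∉ (coneOf n C ⟨hHerm, hClosed, hConv, hCone, hPSD, hNeg⟩ : ConvexCone ℝ _) := by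
    intro hmem
    obtain ⟨A, hA, hAb⟩ := hmem
    exact hb ((phi n).injective hAb ▸ hA)
  obtain ⟨y, hy1, hy2⟩ := ProperCone.hyperplane_separation' (x₀ := phi n b)
    ({ carrier := phi n '' C
       add_mem' := fun hx hy =>
         (coneOf n C ⟨hHerm, hClosed, hConv, hCone, hPSD, hNeg⟩).add_mem hx hy
       zero_mem' := ⟨0, hPSD 0 Matrix.PosSemidef.zero, map_zero _⟩
       smul_mem' := fun c x hx => by
         obtain ⟨A, hA, rfl⟩ := hx
         exact ⟨(c : ℝ) • A, hCone c c.2 A hA, by rw [map_smul]; rfl⟩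
       isClosed' := hcl } : ProperCone ℝ (EuclideanSpace ℂ (Fin n × Fin n))) hbmem
  set Y := (phi n).symm y with hY
  have hyY : y = phi n Y := by simp [hY]
  refine ⟨hpart Y, ?_, ?_, ?_⟩
  · refine posSemidef_of_trace_pairing (hpart_isHermitian Y) fun X hX => ?_
    have := hy1 (phi n X) ⟨X, hPSD X hX, rfl⟩
    rwa [hyY, phi_inner_herm hX.1] at this
  · intro G hG
    have := hy1 (phi n G) ⟨G, hG, rfl⟩
    rwa [hyY, phi_inner_herm (hHerm G hG)] at this
  · have := hy2
    rwa [hyY, phi_inner_herm hbH] at this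

end Witness

section Normalize

variable {n : ℕ}

lemma psd_real_smul {Z : Matrix (Fin n) (Fin n) ℂ} (hZ : Z.PosSemidef) {c : ℝ} (hc : 0 ≤ c) :
    (c • Z).PosSemidef := by
  apply Matrix.PosSemidef.of_dotProduct_mulVec_nonneg
  · show (c • Z)ᴴ = c • Z
    rw [Matrix.conjTranspose_smul, star_trivial, hZ.1.eq]
  · intro x
    have h1 : (c • Z) *ᵥ x = c • (Z *ᵥ x) := by
      ext i
      simp only [mulVec, dotProduct, Matrix.smul_apply, Pi.smul_apply, Complex.real_smul,
        Finset.mul_sum]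
      exact Finset.sum_congr rfl fun j _ => by ring
    rw [h1]
    have h2 : star x ⬝ᵥ c • (Z *ᵥ x) = c • (star x ⬝ᵥ Z *ᵥ x) := dotProduct_smul _ _ _
    rw [h2, Complex.real_smul]
    exact mul_nonneg (Complex.zero_le_real.mpr hc) (hZ.dotProduct_mulVec_nonneg x)

lemma trace_real_smul_re (c : ℝ) (A B : Matrix (Fin n) (Fin n) ℂ) :
    ((A * (c • B)).trace).re = c * ((A * B).trace).re := by
  rw [mul_smul_comm, Matrix.trace_smul, Complex.smul_re, smul_eq_mul]

lemma normalize_mem_dualMap {C : Set (Matrix (Fin n) (Fin n) ℂ)}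
    {Z : Matrix (Fin n) (Fin n) ℂ} (hZ : Z.PosSemidef) (ht : 0 < (Z.trace).re)
    (h : ∀ G ∈ C, 0 ≤ ((G * Z).trace).re) :
    ((Z.trace).re⁻¹ • Z) ∈ dualMap n C := by
  refine ⟨psd_real_smul hZ (inv_nonneg.mpr ht.le), ?_, ?_⟩
  · rw [Matrix.trace_smul]
    have htr : Z.trace = ((Z.trace).re : ℂ) := Complex.ext (by simp) (by simp [psd_trace_im_zero hZ])
    have h9 : (Z.trace.re)⁻¹ • Z.trace = (((Z.trace.re)⁻¹ * Z.trace.re : ℝ) : ℂ) := by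
      rw [htr, Complex.real_smul, ← Complex.ofReal_mul]
      norm_cast
    rw [h9, inv_mul_cancel₀ ht.ne']
    simp
  · intro G hG
    rw [trace_real_smul_re]
    exact mul_nonneg (inv_nonneg.mpr ht.le) (h G hG)

/-- trace of `Z` has positive real part when `Z` is PSD and nonzero -/
lemma psd_trace_re_pos {Z : Matrix (Fin n) (Fin n) ℂ} (hZ : Z.PosSemidef) (hZ0 : Z ≠ 0) :
    0 < (Z.trace).re := by
  rcases lt_or_eq_of_le (psd_trace_re_nonneg hZ) with h | h
  · exact h
  · exfalso
    exact hZ0 (psd_eq_zero_of_trace_eq_zero hZ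
      (Complex.ext (by simp [← h]) (by simp [psd_trace_im_zero hZ])))

end Normalize

section Main

variable {n : ℕ}

open scoped RealInnerProductSpace

lemma dualMap_nonempty {C : Set (Matrix (Fin n) (Fin n) ℂ)} (hC : CoherentMatrixCone n C) :
    (dualMap n C).Nonempty := by
  have hb : (-1 : Matrix (Fin n) (Fin n) ℂ) ∉ C := by
    apply hC.2.2.2.2.2
    rw [neg_neg]
    exact Matrix.PosDef.one
  obtain ⟨Z, hZpsd, hZC, hZb⟩ := witness hC hb (Matrix.isHermitian_one.neg)
  have ht : 0 < (Z.trace).re := by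
    have : ((-1 : Matrix (Fin n) (Fin n) ℂ) * Z).trace = -(Z.trace) := by
      rw [neg_mul, one_mul, Matrix.trace_neg]
    rw [this, Complex.neg_re] at hZb
    linarith
  exact ⟨_, normalize_mem_dualMap hZpsd ht hZC⟩

lemma dualMap_isClosed (C : Set (Matrix (Fin n) (Fin n) ℂ)) : IsClosed (dualMap n C) := by
  have heq : dualMap n C = {ρ : Matrix (Fin n) (Fin n) ℂ | ρ.PosSemidef} ∩
      ({ρ : Matrix (Fin n) (Fin n) ℂ | ρ.trace = 1} ∩
        ⋂ G ∈ C, {ρ : Matrix (Fin n) (Fin n) ℂ | 0 ≤ ((G * ρ).trace).re}) := by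
    ext ρ
    simp only [dualMap, Set.mem_setOf_eq, Set.mem_inter_iff, Set.mem_iInter]
  rw [heq]
  refine IsClosed.inter isClosed_posSemidef (IsClosed.inter ?_ (isClosed_biInter fun G _ => ?_))
  · exact isClosed_eq (continuous_id.matrix_trace) continuous_const
  · exact isClosed_le continuous_const
      (Complex.continuous_re.comp ((continuous_const.matrix_mul continuous_id).matrix_trace))

lemma dualMap_convex (C : Set (Matrix (Fin n) (Fin n) ℂ)) : Convex ℝ (dualMap n C) := by
  rintro ρ₁ ⟨h1p, h1t, h1g⟩ ρ₂ ⟨h2p, h2t, h2g⟩ a b ha hb hab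
  refine ⟨(psd_real_smul h1p ha).add (psd_real_smul h2p hb), ?_, ?_⟩
  · rw [Matrix.trace_add, Matrix.trace_smul, Matrix.trace_smul, h1t, h2t]
    rw [Complex.real_smul, Complex.real_smul, mul_one, mul_one, ← Complex.ofReal_add, hab,
      Complex.ofReal_one]
  · intro G hG
    rw [Matrix.mul_add, Matrix.trace_add, Complex.add_re, trace_real_smul_re,
      trace_real_smul_re]
    exact add_nonneg (mul_nonneg ha (h1g G hG)) (mul_nonneg hb (h2g G hG))

lemma dualMap_subset_of_dual_eq {C₁ C₂ : Set (Matrix (Fin n) (Fin n) ℂ)}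
    (h₁ : CoherentMatrixCone n C₁) (h₂ : CoherentMatrixCone n C₂)
    (h : dualMap n C₁ = dualMap n C₂) : C₁ ⊆ C₂ := by
  intro b hb
  by_contra hbC
  obtain ⟨Z, hZpsd, hZC, hZb⟩ := witness h₂ hbC (h₁.1 b hb)
  have hZ0 : Z ≠ 0 := by
    intro h0
    rw [h0, Matrix.mul_zero, Matrix.trace_zero] at hZb
    simp at hZb
  have ht := psd_trace_re_pos hZpsd hZ0
  have hmem : ((Z.trace).re⁻¹ • Z) ∈ dualMap n C₁ := by
    rw [h]; exact normalize_mem_dualMap hZpsd ht hZC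
  have := hmem.2.2 b hb
  rw [trace_real_smul_re] at this
  nlinarith [mul_pos (inv_pos.mpr ht) (neg_pos.mpr hZb)]

/-- The candidate coherent cone associated to a set of density matrices. -/
def dualCone (n : ℕ) (Q : Set (Matrix (Fin n) (Fin n) ℂ)) : Set (Matrix (Fin n) (Fin n) ℂ) :=
  {G | G.IsHermitian ∧ ∀ σ ∈ Q, 0 ≤ ((G * σ).trace).re}

end Main

section Surj

variable {n : ℕ}

open scoped RealInnerProductSpace

lemma herm_real_smul {G : Matrix (Fin n) (Fin n) ℂ} (hG : G.IsHermitian) (c : ℝ) :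
    (c • G).IsHermitian := by
  show (c • G)ᴴ = c • G
  rw [Matrix.conjTranspose_smul, star_trivial, hG.eq]

lemma dualCone_coherent {Q : Set (Matrix (Fin n) (Fin n) ℂ)} (hne : Q.Nonempty)
    (hsub : Q ⊆ {ρ : Matrix (Fin n) (Fin n) ℂ | ρ.PosSemidef ∧ ρ.trace = 1}) :
    CoherentMatrixCone n (dualCone n Q) := by
  refine ⟨fun G hG => hG.1, ?_, ?_, ?_, ?_, ?_⟩
  · have heq : dualCone n Q = {G : Matrix (Fin n) (Fin n) ℂ | G.IsHermitian} ∩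
        ⋂ σ ∈ Q, {G : Matrix (Fin n) (Fin n) ℂ | 0 ≤ ((G * σ).trace).re} := by
      ext G
      simp only [dualCone, Set.mem_setOf_eq, Set.mem_inter_iff, Set.mem_iInter]
    rw [heq]
    refine IsClosed.inter isClosed_isHermitian (isClosed_biInter fun σ _ => ?_)
    exact isClosed_le continuous_const
      (Complex.continuous_re.comp ((continuous_id.matrix_mul continuous_const).matrix_trace))
  · rintro G₁ ⟨h1h, h1⟩ G₂ ⟨h2h, h2⟩ a b ha hb hab
    refine ⟨(herm_real_smul h1h a).add (herm_real_smul h2h b), fun σ hσ => ?_⟩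
    rw [Matrix.add_mul, Matrix.trace_add, Complex.add_re, Matrix.smul_mul, Matrix.smul_mul,
      Matrix.trace_smul, Matrix.trace_smul, Complex.smul_re, Complex.smul_re]
    exact add_nonneg (mul_nonneg ha (h1 σ hσ)) (mul_nonneg hb (h2 σ hσ))
  · rintro c hc G ⟨hGh, hG⟩
    refine ⟨herm_real_smul hGh c, fun σ hσ => ?_⟩
    rw [Matrix.smul_mul, Matrix.trace_smul, Complex.smul_re]
    exact mul_nonneg hc (hG σ hσ)
  · intro G hG
    exact ⟨hG.1, fun σ hσ => trace_psd_mul_psd_nonneg hG (hsub hσ).1⟩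
  · rintro G hG ⟨hGh, hGQ⟩
    obtain ⟨σ₀, hσ₀⟩ := hne
    have hσne : σ₀ ≠ 0 := by
      intro h0
      have := (hsub hσ₀).2
      rw [h0, Matrix.trace_zero] at this
      exact one_ne_zero this.symm
    have hpos := trace_posdef_mul_psd_pos hG (hsub hσ₀).1 hσne
    have : ((-G) * σ₀).trace = -((G * σ₀).trace) := by rw [neg_mul, Matrix.trace_neg]
    rw [this, Complex.neg_re] at hpos
    have := hGQ σ₀ hσ₀
    linarith

lemma dualMap_dualCone {Q : Set (Matrix (Fin n) (Fin n) ℂ)} (hne : Q.Nonempty)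
    (hcl : IsClosed Q) (hconv : Convex ℝ Q)
    (hsub : Q ⊆ {ρ : Matrix (Fin n) (Fin n) ℂ | ρ.PosSemidef ∧ ρ.trace = 1}) :
    dualMap n (dualCone n Q) = Q := by
  apply Set.Subset.antisymm
  · intro ρ hρ
    by_contra hρQ
    -- separate `phi ρ` from `phi '' Q`
    have hconv' : Convex ℝ (phi n '' Q) :=
      hconv.is_linear_image ⟨fun x y => map_add _ x y, fun c x => map_smul (phi n) c x⟩
    have hcl' : IsClosed (phi n '' Q) := by
      have himg : (phi n '' Q) = (phi n).symm ⁻¹' Q := by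
        ext y
        constructor
        · rintro ⟨A, hA, rfl⟩; simpa using hA
        · intro hy; exact ⟨(phi n).symm y, hy, by simp⟩
      rw [himg]
      exact hcl.preimage (phi n).symm.continuous
    have hmem : phi n ρ ∉ phi n '' Q := by
      rintro ⟨A, hA, hAρ⟩
      exact hρQ ((phi n).injective hAρ ▸ hA)
    obtain ⟨f, u, hfQ, hfρ⟩ := geometric_hahn_banach_closed_point hconv' hcl' hmem
    set v := (InnerProductSpace.toDual ℝ (EuclideanSpace ℂ (Fin n × Fin n))).symm f with hv
    have hfv : ∀ x, ⟪v, x⟫ = f x := fun x => InnerProductSpace.toDual_symm_apply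
    set V := (phi n).symm v with hV
    have hvV : v = phi n V := by simp [hV]
    have hpair : ∀ A : Matrix (Fin n) (Fin n) ℂ, A.IsHermitian →
        f (phi n A) = ((A * hpart V).trace).re := by
      intro A hA
      rw [← hfv, real_inner_comm, hvV, phi_inner_herm hA]
    -- the gamble separating ρ from Q
    set W := hpart V with hW
    set G := u • (1 : Matrix (Fin n) (Fin n) ℂ) - W with hG
    have hGh : G.IsHermitian := by
      show Gᴴ = G
      rw [hG, Matrix.conjTranspose_sub, Matrix.conjTranspose_smul, star_trivial,
        Matrix.conjTranspose_one, (hpart_isHermitian V).eq]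
    have hval : ∀ σ : Matrix (Fin n) (Fin n) ℂ, σ.IsHermitian → σ.trace = 1 →
        ((G * σ).trace).re = u - f (phi n σ) := by
      intro σ hσh hσt
      rw [hG, Matrix.sub_mul, Matrix.smul_mul, Matrix.one_mul, Matrix.trace_sub,
        Matrix.trace_smul, Complex.sub_re, Complex.smul_re, hσt]
      rw [hpair σ hσh, trace_mul_comm]
      simp
    have hGQ : G ∈ dualCone n Q := by
      refine ⟨hGh, fun σ hσ => ?_⟩
      rw [hval σ (hsub hσ).1.1 (hsub hσ).2]
      have := hfQ (phi n σ) ⟨σ, hσ, rfl⟩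
      linarith
    have h1 := hρ.2.2 G hGQ
    rw [hval ρ hρ.1.1 hρ.2.1] at h1
    linarith
  · intro σ hσ
    exact ⟨(hsub hσ).1, (hsub hσ).2, fun G hG => hG.2 σ hσ⟩

end Surj


/-- the dual map is a bijection between coherent matrix cones in `Herm(n)`
and nonempty closed convex sets of density matrices. -/
theorem statement5 (n : ℕ) (hn : 1 ≤ n) :
    Set.BijOn (dualMap n) {C | CoherentMatrixCone n C}
      {Q | Q.Nonempty ∧ IsClosed Q ∧ Convex ℝ Q ∧
        Q ⊆ {ρ : Matrix (Fin n) (Fin n) ℂ | ρ.PosSemidef ∧ ρ.trace = 1}} := by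
  refine ⟨?_, ?_, ?_⟩
  · intro C hC
    exact ⟨dualMap_nonempty hC, dualMap_isClosed C, dualMap_convex C,
      fun ρ hρ => ⟨hρ.1, hρ.2.1⟩⟩
  · intro C₁ h₁ C₂ h₂ h
    exact Set.Subset.antisymm (dualMap_subset_of_dual_eq h₁ h₂ h)
      (dualMap_subset_of_dual_eq h₂ h₁ h.symm)
  · intro Q hQ
    exact ⟨dualCone n Q, dualCone_coherent hQ.1 hQ.2.2.2,
      dualMap_dualCone hQ.1 hQ.2.1 hQ.2.2.1 hQ.2.2.2⟩
end

section
/- Let ρ be a density matrix on ℂ^{n₁} ⊗ ℂ^{n₂} (a Hermitian, positive semidefinite matrix of trace 1 indexed by (Fin n₁ × Fin n₂)). Then ρ is entangled (i.e. ρ does not lie in the convex hull of the pure product states (x⊗y)(x⊗y)† with x ∈ ℂ^{n₁}, y ∈ ℂ^{n₂} unit vectors) if and only if there exists a Hermitian matrix G indexed by (Fin n₁ × Fin n₂) such that Re Tr(Gρ) ≥ 0 and Re((x⊗y)†G(x⊗y)) < 0 for all unit vectors x ∈ ℂ^{n₁} and y ∈ ℂ^{n₂}. -/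
open Matrix ComplexOrder

/-- The tensor product of two vectors: `(x ⊗ y)(i,j) = xᵢ · yⱼ`. -/
def tens {n₁ n₂ : ℕ} (x : Fin n₁ → ℂ) (y : Fin n₂ → ℂ) : Fin n₁ × Fin n₂ → ℂ :=
  fun p => x p.1 * y p.2

/-- The rank-one matrix `v v†`. -/
def outer {ι : Type*} (v : ι → ℂ) : Matrix ι ι ℂ :=
  Matrix.of fun s t => v s * (starRingEnd ℂ) (v t)

/-- A unit vector: `∑ |xᵢ|² = 1`. -/
def IsUnitVec {n : ℕ} (x : Fin n → ℂ) : Prop :=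
  ∑ i, Complex.normSq (x i) = 1

/-- The set of pure product states `(x⊗y)(x⊗y)†` with `x, y` unit vectors. -/
def prodStates (n₁ n₂ : ℕ) : Set (Matrix (Fin n₁ × Fin n₂) (Fin n₁ × Fin n₂) ℂ) :=
  {M | ∃ (x : Fin n₁ → ℂ) (y : Fin n₂ → ℂ), IsUnitVec x ∧ IsUnitVec y ∧ M = outer (tens x y)}

/-- Convex hull of a compact set in a finite-dimensional real TVS is compact. -/
lemma isCompact_convexHull_fd {E : Type*} [AddCommGroup E] [Module ℝ E]
    [TopologicalSpace E] [IsTopologicalAddGroup E] [ContinuousSMul ℝ E]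
    [FiniteDimensional ℝ E] {s : Set E} (hs : IsCompact s) :
    IsCompact (convexHull ℝ s) := by
  rcases s.eq_empty_or_nonempty with rfl | ⟨e₀, he₀⟩
  · simp
  set k := Module.finrank ℝ E + 1 with hk
  have hcont : Continuous (fun p : (Fin k → ℝ) × (Fin k → E) => ∑ i, p.1 i • p.2 i) :=
    continuous_finset_sum _ fun i _ =>
      ((continuous_apply i).comp continuous_fst).smul ((continuous_apply i).comp continuous_snd)
  have hK : IsCompact ((stdSimplex ℝ (Fin k)) ×ˢ (Set.univ.pi fun _ : Fin k => s)) :=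
    (isCompact_stdSimplex ℝ _).prod (isCompact_univ_pi fun _ => hs)
  have himg : convexHull ℝ s =
      (fun p : (Fin k → ℝ) × (Fin k → E) => ∑ i, p.1 i • p.2 i) ''
        ((stdSimplex ℝ (Fin k)) ×ˢ (Set.univ.pi fun _ : Fin k => s)) := by
    apply Set.Subset.antisymm
    · intro x hx
      obtain ⟨ι, hι, z, w, hzs, haff, hw, hw1, hx⟩ := eq_pos_convex_span_of_mem_convexHull hx
      have hcard : Fintype.card ι ≤ k := by
        refine le_trans haff.card_le_finrank_succ ?_
        exact Nat.add_le_add_right (Submodule.finrank_le _) 1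
      obtain ⟨g⟩ : Nonempty (ι ↪ Fin k) :=
        Function.Embedding.nonempty_of_card_le (by simpa using hcard)
      have hw'0 : ∀ j, 0 ≤ Function.extend g w 0 j := by
        intro j
        by_cases h : ∃ i, g i = j
        · obtain ⟨i, rfl⟩ := h
          rw [g.injective.extend_apply]
          exact (hw i).le
        · rw [Function.extend_apply' _ _ _ h]
          rfl
      have hsubset : (Finset.univ.map g) ⊆ Finset.univ := Finset.subset_univ _
      have hnotin : ∀ j ∈ Finset.univ, j ∉ Finset.univ.map g → ¬∃ i, g i = j := by
        intro j _ hj ⟨i, hi⟩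
        exact hj (Finset.mem_map.2 ⟨i, Finset.mem_univ i, hi⟩)
      have hw'sum : ∑ j, Function.extend g w 0 j = 1 := by
        rw [← hw1]
        rw [← Finset.sum_subset hsubset (fun j h1 h2 => by
          rw [Function.extend_apply' _ _ _ (hnotin j h1 h2)]; rfl)]
        rw [Finset.sum_map]
        exact Finset.sum_congr rfl fun i _ => by rw [g.injective.extend_apply]
      refine ⟨(Function.extend g w 0, Function.extend g z fun _ => e₀),
        ⟨⟨hw'0, hw'sum⟩, fun j _ => ?_⟩, ?_⟩
      · show Function.extend g z (fun _ => e₀) j ∈ s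
        by_cases h : ∃ i, g i = j
        · obtain ⟨i, rfl⟩ := h
          rw [g.injective.extend_apply]
          exact hzs ⟨i, rfl⟩
        · rw [Function.extend_apply' _ _ _ h]
          exact he₀
      · show ∑ j, Function.extend g w 0 j • Function.extend g z (fun _ => e₀) j = x
        rw [← hx]
        rw [← Finset.sum_subset hsubset (fun j h1 h2 => by
          rw [Function.extend_apply' _ _ _ (hnotin j h1 h2)]; simp)]
        rw [Finset.sum_map]
        exact Finset.sum_congr rfl fun i _ => by
          rw [g.injective.extend_apply, g.injective.extend_apply]
    · rintro _ ⟨⟨w, z⟩, ⟨hw, hz⟩, rfl⟩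
      exact Convex.sum_mem (convex_convexHull ℝ s) (fun i _ => hw.1 i) hw.2
        fun i _ => subset_convexHull ℝ s (hz i (Set.mem_univ i))
  rw [himg]
  exact hK.image hcont

lemma trace_mul_outer {ι : Type*} [Fintype ι] (G : Matrix ι ι ℂ) (v : ι → ℂ) :
    (G * outer v).trace = star v ⬝ᵥ G.mulVec v := by
  simp only [Matrix.trace, Matrix.diag, Matrix.mul_apply, outer, Matrix.of_apply,
    dotProduct, Matrix.mulVec, Pi.star_apply, Finset.mul_sum]
  refine Finset.sum_congr rfl fun s _ => Finset.sum_congr rfl fun t _ => ?_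
  simp [RCLike.star_def]
  ring

lemma trace_outer_tens {n₁ n₂ : ℕ} {x : Fin n₁ → ℂ} {y : Fin n₂ → ℂ}
    (hx : IsUnitVec x) (hy : IsUnitVec y) : (outer (tens x y)).trace = 1 := by
  have : (outer (tens x y)).trace =
      ((∑ i, Complex.normSq (x i) : ℝ) : ℂ) * ((∑ j, Complex.normSq (y j) : ℝ) : ℂ) := by
    simp only [Matrix.trace, Matrix.diag, outer, Matrix.of_apply, tens]
    rw [Fintype.sum_prod_type]
    push_cast
    rw [Finset.sum_mul_sum]
    refine Finset.sum_congr rfl fun i _ => Finset.sum_congr rfl fun j _ => ?_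
    rw [_root_.map_mul, ← Complex.mul_conj (x i), ← Complex.mul_conj (y j)]
    ring
  rw [this, hx, hy]
  norm_num

/-- Every real-linear functional on complex matrices is `M ↦ Re Tr (A M)` for some `A`. -/
lemma exists_repr {ι : Type*} [Fintype ι] [DecidableEq ι] (f : Matrix ι ι ℂ →ₗ[ℝ] ℝ) :
    ∃ A : Matrix ι ι ℂ, ∀ M, ((A * M).trace).re = f M := by
  refine ⟨Matrix.of fun s t =>
    ⟨f (Matrix.single t s 1), -f (Matrix.single t s Complex.I)⟩, fun M => ?_⟩
  conv_rhs => rw [Matrix.matrix_eq_sum_single M]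
  simp only [map_sum]
  have hre : ((Matrix.of (fun s t =>
      (⟨f (Matrix.single t s 1), -f (Matrix.single t s Complex.I)⟩ : ℂ)) *
      M).trace).re = ∑ s, ∑ t, (f (Matrix.single t s 1) * (M t s).re
        + f (Matrix.single t s Complex.I) * (M t s).im) := by
    simp only [Matrix.trace, Matrix.diag, Matrix.mul_apply, Complex.re_sum]
    refine Finset.sum_congr rfl fun s _ => Finset.sum_congr rfl fun t _ => ?_
    simp [Complex.mul_re]
  rw [hre, Finset.sum_comm]
  refine Finset.sum_congr rfl fun t _ => Finset.sum_congr rfl fun s _ => ?_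
  have hdecomp : Matrix.single t s (M t s) =
      (M t s).re • Matrix.single t s 1 + (M t s).im • Matrix.single t s Complex.I := by
    ext a b
    by_cases h : t = a ∧ s = b
    · simp only [Matrix.single, Matrix.of_apply, Matrix.add_apply, Matrix.smul_apply,
        if_pos h]
      simp [Complex.real_smul, Complex.ext_iff]
    · simp only [Matrix.single, Matrix.of_apply, Matrix.add_apply, Matrix.smul_apply,
        if_neg h]
      simp
  rw [hdecomp, map_add, LinearMap.map_smul, LinearMap.map_smul]
  simp [smul_eq_mul]
  ring

lemma re_trace_conjT {ι : Type*} [Fintype ι] (A M : Matrix ι ι ℂ) (hM : M.IsHermitian) :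
    ((Aᴴ * M).trace).re = ((A * M).trace).re := by
  have h1 : (Aᴴ * M).trace = (starRingEnd ℂ) ((A * M).trace) := by
    calc (Aᴴ * M).trace = ((Mᴴ * A)ᴴ).trace := by
          rw [Matrix.conjTranspose_mul, Matrix.conjTranspose_conjTranspose,
            Matrix.trace_mul_comm]
    _ = star ((Mᴴ * A).trace) := Matrix.trace_conjTranspose _
    _ = (starRingEnd ℂ) ((A * M).trace) := by rw [hM.eq, Matrix.trace_mul_comm]; rfl
  rw [h1, Complex.conj_re]

/-- a density matrix `ρ` on `ℂ^{n₁} ⊗ ℂ^{n₂}` is entangled (not in the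
convex hull of the pure product states) iff there is a Hermitian matrix `G` with
`Re Tr(Gρ) ≥ 0` and `Re((x⊗y)†G(x⊗y)) < 0` for all unit vectors `x`, `y`. -/
theorem statement7 (n₁ n₂ : ℕ)
    (ρ : Matrix (Fin n₁ × Fin n₂) (Fin n₁ × Fin n₂) ℂ)
    (hρ : ρ.PosSemidef) (htr : ρ.trace = 1) :
    ρ ∉ convexHull ℝ (prodStates n₁ n₂) ↔
      ∃ G : Matrix (Fin n₁ × Fin n₂) (Fin n₁ × Fin n₂) ℂ, G.IsHermitian ∧
        0 ≤ ((G * ρ).trace).re ∧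
        ∀ (x : Fin n₁ → ℂ) (y : Fin n₂ → ℂ), IsUnitVec x → IsUnitVec y →
          (star (tens x y) ⬝ᵥ G.mulVec (tens x y)).re < 0 := by
  haveI : LocallyConvexSpace ℝ (Matrix (Fin n₁ × Fin n₂) (Fin n₁ × Fin n₂) ℂ) :=
    inferInstanceAs (LocallyConvexSpace ℝ (Fin n₁ × Fin n₂ → Fin n₁ × Fin n₂ → ℂ))
  constructor
  · intro hρnot
    -- compactness of prodStates
    have hS : ∀ n : ℕ, IsCompact {x : Fin n → ℂ | IsUnitVec x} := by
      intro n
      have hclosed : IsClosed {x : Fin n → ℂ | IsUnitVec x} := by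
        have : Continuous fun x : Fin n → ℂ => ∑ i, Complex.normSq (x i) :=
          continuous_finset_sum _ fun i _ => Complex.continuous_normSq.comp (continuous_apply i)
        exact isClosed_eq this continuous_const
      refine (isCompact_closedBall (0 : Fin n → ℂ) 1).of_isClosed_subset hclosed ?_
      intro x hx
      rw [Metric.mem_closedBall, dist_zero_right]
      rw [pi_norm_le_iff_of_nonneg zero_le_one]
      intro i
      have h1 : Complex.normSq (x i) ≤ 1 := by
        rw [← hx]
        exact Finset.single_le_sum (fun j _ => Complex.normSq_nonneg (x j)) (Finset.mem_univ i)
      have := Complex.normSq_eq_norm_sq (x i)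
      nlinarith [norm_nonneg (x i)]
    have hcomp : IsCompact (prodStates n₁ n₂) := by
      have himg : prodStates n₁ n₂ =
          (fun p : (Fin n₁ → ℂ) × (Fin n₂ → ℂ) => outer (tens p.1 p.2)) ''
            ({x | IsUnitVec x} ×ˢ {y | IsUnitVec y}) := by
        ext M
        constructor
        · rintro ⟨x, y, hx, hy, rfl⟩
          exact ⟨(x, y), ⟨hx, hy⟩, rfl⟩
        · rintro ⟨⟨x, y⟩, ⟨hx, hy⟩, rfl⟩
          exact ⟨x, y, hx, hy, rfl⟩
      rw [himg]
      refine ((hS n₁).prod (hS n₂)).image ?_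
      apply continuous_matrix
      intro s t
      simp only [outer, tens, Matrix.of_apply]
      apply Continuous.mul
      · exact (((continuous_apply s.1).comp continuous_fst).mul
          ((continuous_apply s.2).comp continuous_snd))
      · exact Complex.continuous_conj.comp (((continuous_apply t.1).comp continuous_fst).mul
          ((continuous_apply t.2).comp continuous_snd))
    have hconv : Convex ℝ (convexHull ℝ (prodStates n₁ n₂)) := convex_convexHull _ _
    have hclosed : IsClosed (convexHull ℝ (prodStates n₁ n₂)) :=
      (isCompact_convexHull_fd hcomp).isClosed
    obtain ⟨f, u, hfs, hfρ⟩ := geometric_hahn_banach_closed_point hconv hclosed hρnot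
    obtain ⟨A, hA0⟩ := exists_repr (f.toLinearMap)
    have hA : ∀ M : Matrix (Fin n₁ × Fin n₂) (Fin n₁ × Fin n₂) ℂ,
        ((A * M).trace).re = f M := fun M => hA0 M
    refine ⟨(A + Aᴴ) - ((2 * u : ℝ) : ℂ) • 1, ?_, ?_, ?_⟩
    · -- Hermitian
      unfold Matrix.IsHermitian
      rw [Matrix.conjTranspose_sub, Matrix.conjTranspose_add,
        Matrix.conjTranspose_conjTranspose, Matrix.conjTranspose_smul,
        Matrix.conjTranspose_one]
      rw [Complex.star_def, Complex.conj_ofReal, add_comm Aᴴ A]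
    · -- value at ρ
      have hval : ∀ M : Matrix (Fin n₁ × Fin n₂) (Fin n₁ × Fin n₂) ℂ, M.IsHermitian →
          (((((A + Aᴴ) - ((2 * u : ℝ) : ℂ) • 1) * M).trace).re)
            = 2 * f M - 2 * u * (M.trace).re := by
        intro M hM
        rw [Matrix.sub_mul, Matrix.add_mul, Matrix.smul_mul, Matrix.one_mul]
        rw [Matrix.trace_sub, Matrix.trace_add, Matrix.trace_smul]
        rw [Complex.sub_re, Complex.add_re]
        rw [re_trace_conjT A M hM, hA M]
        have : (((2 * u : ℝ) : ℂ) • M.trace).re = 2 * u * (M.trace).re := by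
          rw [smul_eq_mul]
          simp [Complex.mul_re]
        rw [this]
        linarith
      rw [hval ρ hρ.1]
      have : (ρ.trace).re = 1 := by rw [htr]; rfl
      rw [this]
      have hf := hfρ
      nlinarith [hfρ]
    · -- negative on product states
      intro x y hx hy
      have hmem : outer (tens x y) ∈ convexHull ℝ (prodStates n₁ n₂) :=
        subset_convexHull _ _ ⟨x, y, hx, hy, rfl⟩
      have hPH : (outer (tens x y)).IsHermitian := by
        unfold Matrix.IsHermitian outer
        ext s t
        simp [Matrix.conjTranspose_apply]
        ring
      have hval : (((((A + Aᴴ) - ((2 * u : ℝ) : ℂ) • 1) * outer (tens x y)).trace).re)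
            = 2 * f (outer (tens x y)) - 2 * u * ((outer (tens x y)).trace).re := by
        rw [Matrix.sub_mul, Matrix.add_mul, Matrix.smul_mul, Matrix.one_mul]
        rw [Matrix.trace_sub, Matrix.trace_add, Matrix.trace_smul]
        rw [Complex.sub_re, Complex.add_re]
        rw [re_trace_conjT A _ hPH, hA]
        have : (((2 * u : ℝ) : ℂ) • (outer (tens x y)).trace).re
            = 2 * u * ((outer (tens x y)).trace).re := by
          rw [smul_eq_mul]
          simp [Complex.mul_re]
        rw [this]
        linarith
      rw [← trace_mul_outer, hval, trace_outer_tens hx hy]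
      simp only [Complex.one_re]
      have := hfs _ hmem
      nlinarith
  · rintro ⟨G, hG, hGρ, hGneg⟩ hmem
    have hlin : IsLinearMap ℝ (fun M : Matrix (Fin n₁ × Fin n₂) (Fin n₁ × Fin n₂) ℂ =>
        ((G * M).trace).re) := by
      constructor
      · intro M N
        rw [Matrix.mul_add, Matrix.trace_add, Complex.add_re]
      · intro r M
        rw [Matrix.mul_smul, Matrix.trace_smul]
        simp [Complex.real_smul, Complex.mul_re]
    have hsub : convexHull ℝ (prodStates n₁ n₂) ⊆
        {M | ((G * M).trace).re < 0} := by
      apply convexHull_min ?_ (convex_halfSpace_lt hlin 0)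
      rintro M ⟨x, y, hx, hy, rfl⟩
      have := hGneg x y hx hy
      rw [Set.mem_setOf_eq, trace_mul_outer]
      exact this
    have := hsub hmem
    rw [Set.mem_setOf_eq] at this
    linarith
end

section
/- The bivariate real polynomial m(X,Y) = X⁴Y² + X²Y⁴ − X²Y² + 1 satisfies m(a,b) ≥ 0 for all (a,b) ∈ ℝ², yet m is not a sum of squares: there is no finite family of polynomials q₁,…,q_k ∈ ℝ[X,Y] with m = q₁² + ··· + q_k². -/
open MvPolynomial

/-- The Motzkin polynomial `m(X,Y) = X⁴Y² + X²Y⁴ − X²Y² + 1`. -/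
noncomputable def motzkin : MvPolynomial (Fin 2) ℝ :=
  X 0 ^ 4 * X 1 ^ 2 + X 0 ^ 2 * X 1 ^ 4 - X 0 ^ 2 * X 1 ^ 2 + 1

noncomputable section MotzkinAux

/-- The exponent vector `(j, k)` as a `Fin 2 →₀ ℕ`. -/
def msg (j k : ℕ) : Fin 2 →₀ ℕ := Finsupp.single 0 j + Finsupp.single 1 k

@[simp] lemma msg_apply0 (j k : ℕ) : msg j k 0 = j := by
  simp [msg, Finsupp.single_apply]

@[simp] lemma msg_apply1 (j k : ℕ) : msg j k 1 = k := by
  simp [msg, Finsupp.single_apply]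

lemma eq_msg (s : Fin 2 →₀ ℕ) : s = msg (s 0) (s 1) := by
  ext i
  fin_cases i <;> simp

lemma msg_add (j k j' k' : ℕ) : msg j k + msg j' k' = msg (j + j') (k + k') := by
  ext i; fin_cases i <;> simp

/-- Restriction of a bivariate polynomial along the parametrized line `t ↦ (a t, b t)`. -/
def lft (a b : ℝ) : MvPolynomial (Fin 2) ℝ →ₐ[ℝ] Polynomial ℝ :=
  aeval ![Polynomial.C a * Polynomial.X, Polynomial.C b * Polynomial.X]

lemma lft_eval (a b t : ℝ) (q : MvPolynomial (Fin 2) ℝ) :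
    (lft a b q).eval t = MvPolynomial.eval ![a * t, b * t] q := by
  induction q using MvPolynomial.induction_on with
  | C c => simp [lft]
  | add p q hp hq => simp [hp, hq]
  | mul_X p i h =>
      fin_cases i <;>
      · simp only [lft, map_mul, aeval_X, Polynomial.eval_mul, Polynomial.eval_C,
          Polynomial.eval_X, MvPolynomial.eval_mul, MvPolynomial.eval_X, Matrix.cons_val_zero,
          Matrix.cons_val_one, Matrix.head_cons] at *
        rw [h]; simp

lemma lft_coeff (a b : ℝ) (q : MvPolynomial (Fin 2) ℝ) (n : ℕ) :
    (lft a b q).coeff n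
      = ∑ s ∈ q.support, (if s 0 + s 1 = n then a ^ s 0 * b ^ s 1 * q.coeff s else 0) := by
  conv_lhs => rw [q.as_sum]
  rw [map_sum, Polynomial.finset_sum_coeff]
  refine Finset.sum_congr rfl fun s _ => ?_
  rw [lft, aeval_monomial]
  have h1 : s.prod (fun i e => (![Polynomial.C a * Polynomial.X, Polynomial.C b * Polynomial.X] i) ^ e)
      = (Polynomial.C a * Polynomial.X) ^ (s 0) * (Polynomial.C b * Polynomial.X) ^ (s 1) := by
    rw [Finsupp.prod_fintype _ _ (fun i => pow_zero _), Fin.prod_univ_two]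
    simp
  rw [h1]
  have h2 : (algebraMap ℝ (Polynomial ℝ)) (MvPolynomial.coeff s q) *
      ((Polynomial.C a * Polynomial.X) ^ (s 0) * (Polynomial.C b * Polynomial.X) ^ (s 1))
      = Polynomial.C (a ^ s 0 * b ^ s 1 * MvPolynomial.coeff s q) * Polynomial.X ^ (s 0 + s 1) := by
    simp only [Polynomial.algebraMap_eq, mul_pow, ← Polynomial.C_pow, map_mul, pow_add]
    ring
  rw [h2, Polynomial.coeff_C_mul, Polynomial.coeff_X_pow]
  by_cases h : s 0 + s 1 = n
  · simp [h]
  · rw [if_neg (fun h' => h h'.symm), if_neg h, mul_zero]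

lemma natDegree_le_of_sq_le {p g : Polynomial ℝ} {n : ℕ} (hg : g.natDegree ≤ 2 * n)
    (h : ∀ t : ℝ, (p.eval t) ^ 2 ≤ g.eval t) : p.natDegree ≤ n := by
  by_contra hc
  push_neg at hc
  have hp0 : p ≠ 0 := by
    rintro rfl
    simp at hc
  have hpow : (p ^ 2).natDegree = 2 * p.natDegree := by
    simpa [two_mul] using Polynomial.natDegree_pow p 2
  have hdlt : g.degree < (p ^ 2).degree := by
    rw [Polynomial.degree_eq_natDegree (pow_ne_zero 2 hp0), hpow]
    calc g.degree ≤ (g.natDegree : WithBot ℕ) := Polynomial.degree_le_natDegree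
      _ < ((2 * p.natDegree : ℕ) : WithBot ℕ) := by
          exact_mod_cast (by omega : g.natDegree < 2 * p.natDegree)
  set q : Polynomial ℝ := p ^ 2 - g with hq
  have hlc : q.leadingCoeff = (p.leadingCoeff) ^ 2 := by
    rw [hq, Polynomial.leadingCoeff_sub_of_degree_lt hdlt, Polynomial.leadingCoeff_pow]
  have hdeg : 0 < q.degree := by
    rw [hq, Polynomial.degree_sub_eq_left_of_degree_lt hdlt,
      Polynomial.degree_eq_natDegree (pow_ne_zero 2 hp0), hpow]
    exact_mod_cast (by omega : 0 < 2 * p.natDegree)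
  have htend := Polynomial.tendsto_atTop_of_leadingCoeff_nonneg q hdeg (by
    rw [hlc]; positivity)
  obtain ⟨t, ht⟩ := (htend.eventually_ge_atTop 1).exists
  have := h t
  rw [hq] at ht
  simp only [Polynomial.eval_sub, Polynomial.eval_pow] at ht
  linarith

lemma lft10_coeff (q : MvPolynomial (Fin 2) ℝ) (n : ℕ) :
    (lft 1 0 q).coeff n = coeff (msg n 0) q := by
  rw [lft_coeff]
  have key : ∀ s ∈ q.support,
      (if s 0 + s 1 = n then (1:ℝ) ^ s 0 * (0:ℝ) ^ s 1 * q.coeff s else 0)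
        = if s = msg n 0 then q.coeff s else 0 := by
    intro s _
    by_cases hs : s = msg n 0
    · rw [if_pos hs, hs]; simp
    · rw [if_neg hs]
      by_cases hsum : s 0 + s 1 = n
      · have h1 : s 1 ≠ 0 := by
          intro h0
          apply hs
          have h2 : s 0 = n := by omega
          rw [eq_msg s, h0, h2]
        rw [if_pos hsum, zero_pow h1, mul_zero, zero_mul]
      · rw [if_neg hsum]
  rw [Finset.sum_congr rfl key, Finset.sum_ite_eq' q.support (msg n 0) (fun s => q.coeff s)]
  by_cases h : msg n 0 ∈ q.support
  · rw [if_pos h]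
  · rw [if_neg h]; exact (MvPolynomial.notMem_support_iff.mp h).symm

lemma lft01_coeff (q : MvPolynomial (Fin 2) ℝ) (n : ℕ) :
    (lft 0 1 q).coeff n = coeff (msg 0 n) q := by
  rw [lft_coeff]
  have key : ∀ s ∈ q.support,
      (if s 0 + s 1 = n then (0:ℝ) ^ s 0 * (1:ℝ) ^ s 1 * q.coeff s else 0)
        = if s = msg 0 n then q.coeff s else 0 := by
    intro s _
    by_cases hs : s = msg 0 n
    · rw [if_pos hs, hs]; simp
    · rw [if_neg hs]
      by_cases hsum : s 0 + s 1 = n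
      · have h1 : s 0 ≠ 0 := by
          intro h0
          apply hs
          have h2 : s 1 = n := by omega
          rw [eq_msg s, h0, h2]
        rw [if_pos hsum, zero_pow h1]; ring
      · rw [if_neg hsum]
  rw [Finset.sum_congr rfl key, Finset.sum_ite_eq' q.support (msg 0 n) (fun s => q.coeff s)]
  by_cases h : msg 0 n ∈ q.support
  · rw [if_pos h]
  · rw [if_neg h]; exact (MvPolynomial.notMem_support_iff.mp h).symm

lemma coeff4_add (q : MvPolynomial (Fin 2) ℝ)
    (h40 : coeff (msg 4 0) q = 0) (h04 : coeff (msg 0 4) q = 0) :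
    (lft 1 1 q).coeff 4 + (lft 1 (-1) q).coeff 4 = 2 * coeff (msg 2 2) q := by
  rw [lft_coeff, lft_coeff, ← Finset.sum_add_distrib]
  have key : ∀ s ∈ q.support,
      ((if s 0 + s 1 = 4 then (1:ℝ) ^ s 0 * (1:ℝ) ^ s 1 * q.coeff s else 0)
        + (if s 0 + s 1 = 4 then (1:ℝ) ^ s 0 * (-1:ℝ) ^ s 1 * q.coeff s else 0))
        = if s = msg 2 2 then 2 * q.coeff s else 0 := by
    intro s _
    by_cases hsum : s 0 + s 1 = 4
    · rw [if_pos hsum, if_pos hsum]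
      by_cases h22 : s = msg 2 2
      · rw [if_pos h22]
        have e0 : s 0 = 2 := by rw [h22]; simp
        have e1 : s 1 = 2 := by rw [h22]; simp
        rw [e0, e1]; norm_num; ring
      · rw [if_neg h22]
        have hcases : s 1 = 1 ∨ s 1 = 3 ∨ (s 1 = 0 ∧ s 0 = 4) ∨ (s 1 = 4 ∧ s 0 = 0) := by
          have : ¬(s 0 = 2 ∧ s 1 = 2) := by
            rintro ⟨a, b⟩; exact h22 (by rw [eq_msg s, a, b])
          omega
        rcases hcases with h | h | ⟨h, h0⟩ | ⟨h, h0⟩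
        · rw [h]; ring
        · rw [h]; ring
        · have hz : q.coeff s = 0 := by rw [eq_msg s, h0, h]; exact h40
          rw [hz]; ring
        · have hz : q.coeff s = 0 := by rw [eq_msg s, h0, h]; exact h04
          rw [hz]; ring
    · rw [if_neg hsum, if_neg hsum]
      have h22 : s ≠ msg 2 2 := by
        intro h; apply hsum
        rw [h]; simp
      rw [if_neg h22]; ring
  rw [Finset.sum_congr rfl key, Finset.sum_ite_eq' q.support (msg 2 2) (fun s => 2 * q.coeff s)]
  by_cases h : msg 2 2 ∈ q.support
  · rw [if_pos h]
  · rw [if_neg h, MvPolynomial.notMem_support_iff.mp h, mul_zero]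

lemma nat_cases (j k j' k' : ℕ) (h0 : j + j' = 2) (h1 : k + k' = 2)
    (hne : ¬(j = 1 ∧ k = 1)) :
    (j = 0 ∧ k = 0 ∧ j' = 2 ∧ k' = 2)
      ∨ (j = 0 ∧ k = 1 ∧ j' = 2 ∧ k' = 1)
      ∨ (j = 0 ∧ k = 2 ∧ j' = 2 ∧ k' = 0)
      ∨ (j = 1 ∧ k = 0 ∧ j' = 1 ∧ k' = 2)
      ∨ (j = 1 ∧ k = 2 ∧ j' = 1 ∧ k' = 0)
      ∨ (j = 2 ∧ k = 0 ∧ j' = 0 ∧ k' = 2)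
      ∨ (j = 2 ∧ k = 1 ∧ j' = 0 ∧ k' = 1)
      ∨ (j = 2 ∧ k = 2 ∧ j' = 0 ∧ k' = 0) := by
  have hj : j ≤ 2 := by omega
  have hk : k ≤ 2 := by omega
  interval_cases j <;> interval_cases k <;> norm_num <;> omega

lemma coeff22_sq (q : MvPolynomial (Fin 2) ℝ)
    (h10 : coeff (msg 1 0) q = 0) (h01 : coeff (msg 0 1) q = 0)
    (h20 : coeff (msg 2 0) q = 0) (h02 : coeff (msg 0 2) q = 0)
    (h22 : coeff (msg 2 2) q = 0) :
    coeff (msg 2 2) (q ^ 2) = (coeff (msg 1 1) q) ^ 2 := by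
  rw [sq, MvPolynomial.coeff_mul]
  have key : ∀ x ∈ Finset.HasAntidiagonal.antidiagonal (msg 2 2), coeff x.1 q * coeff x.2 q
      = if x = (msg 1 1, msg 1 1) then coeff x.1 q * coeff x.2 q else 0 := by
    intro x hx
    rw [Finset.HasAntidiagonal.mem_antidiagonal] at hx
    have h0 : x.1 0 + x.2 0 = 2 := by
      have := DFunLike.congr_fun hx 0; simpa using this
    have h1 : x.1 1 + x.2 1 = 2 := by
      have := DFunLike.congr_fun hx 1; simpa using this
    by_cases hc : x = (msg 1 1, msg 1 1)
    · rw [if_pos hc]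
    · rw [if_neg hc]
      have hne : ¬(x.1 0 = 1 ∧ x.1 1 = 1) := by
        rintro ⟨a, b⟩
        apply hc
        have c : x.2 0 = 1 := by omega
        have d : x.2 1 = 1 := by omega
        exact Prod.ext (by rw [eq_msg x.1, a, b]) (by rw [eq_msg x.2, c, d])
      have big := nat_cases _ _ _ _ h0 h1 hne
      have e1 : x.1 = msg (x.1 0) (x.1 1) := eq_msg _
      have e2 : x.2 = msg (x.2 0) (x.2 1) := eq_msg _
      clear hx hne h0 h1
      rcases big with ⟨a, b, c, d⟩ | ⟨a, b, c, d⟩ | ⟨a, b, c, d⟩ | ⟨a, b, c, d⟩ |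
        ⟨a, b, c, d⟩ | ⟨a, b, c, d⟩ | ⟨a, b, c, d⟩ | ⟨a, b, c, d⟩ <;>
        rw [e1, e2, a, b, c, d] <;>
        simp [h10, h01, h20, h02, h22]
  rw [Finset.sum_congr rfl key,
    Finset.sum_ite_eq' _ (msg 1 1, msg 1 1) (fun x => coeff x.1 q * coeff x.2 q)]
  have hmem : ((msg 1 1, msg 1 1) : _ × _) ∈ Finset.HasAntidiagonal.antidiagonal (msg 2 2) := by
    rw [Finset.HasAntidiagonal.mem_antidiagonal, msg_add]
  rw [if_pos hmem, sq]

lemma coeff_motzkin_22 : coeff (msg 2 2) motzkin = -1 := by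
  have h1 : (X 0 ^ 4 * X 1 ^ 2 : MvPolynomial (Fin 2) ℝ) = monomial (msg 4 2) 1 := by
    rw [X_pow_eq_monomial, X_pow_eq_monomial, monomial_mul, one_mul]; rfl
  have h2 : (X 0 ^ 2 * X 1 ^ 4 : MvPolynomial (Fin 2) ℝ) = monomial (msg 2 4) 1 := by
    rw [X_pow_eq_monomial, X_pow_eq_monomial, monomial_mul, one_mul]; rfl
  have h3 : (X 0 ^ 2 * X 1 ^ 2 : MvPolynomial (Fin 2) ℝ) = monomial (msg 2 2) 1 := by
    rw [X_pow_eq_monomial, X_pow_eq_monomial, monomial_mul, one_mul]; rfl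
  have e1 : msg 4 2 ≠ msg 2 2 := by
    intro h
    have := DFunLike.congr_fun h 0
    simp at this
  have e2 : msg 2 4 ≠ msg 2 2 := by
    intro h
    have := DFunLike.congr_fun h 1
    simp at this
  have e0 : msg 2 2 ≠ 0 := by
    intro h
    have := DFunLike.congr_fun h 0
    simp at this
  rw [motzkin, coeff_add, coeff_sub, coeff_add, h1, h2, h3,
    coeff_monomial, coeff_monomial, coeff_monomial, if_neg e1, if_neg e2, if_pos rfl,
    coeff_one, if_neg (fun h => e0 h.symm)]
  norm_num

lemma lft_motzkin_10 : lft 1 0 motzkin = 1 := by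
  simp [lft, motzkin]

lemma lft_motzkin_01 : lft 0 1 motzkin = 1 := by
  simp [lft, motzkin]

lemma lft_motzkin_diag : lft 1 1 motzkin
    = 2 * Polynomial.X ^ 6 - Polynomial.X ^ 4 + 1 := by
  simp [lft, motzkin]
  ring

lemma lft_motzkin_anti : lft 1 (-1) motzkin
    = 2 * Polynomial.X ^ 6 - Polynomial.X ^ 4 + 1 := by
  simp [lft, motzkin]
  ring

lemma deg6 : (2 * Polynomial.X ^ 6 - Polynomial.X ^ 4 + 1 : Polynomial ℝ).natDegree ≤ 6 := by
  compute_degree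

end MotzkinAux

/-- the Motzkin polynomial is nonnegative on all of `ℝ²`, yet it is not a
sum of squares of polynomials. -/
theorem statement13 :
    (∀ a b : ℝ, 0 ≤ MvPolynomial.eval ![a, b] motzkin) ∧
    ¬ ∃ (k : ℕ) (q : Fin k → MvPolynomial (Fin 2) ℝ), motzkin = ∑ i, (q i) ^ 2 := by
  constructor
  · intro a b
    have hev : MvPolynomial.eval ![a, b] motzkin
        = a ^ 4 * b ^ 2 + a ^ 2 * b ^ 4 - a ^ 2 * b ^ 2 + 1 := by
      simp [motzkin]
    rw [hev]
    nlinarith [sq_nonneg (a * b), sq_nonneg (a - b), sq_nonneg (a + b),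
      sq_nonneg (a * b * (a + b)), sq_nonneg (a * b * (a - b)),
      sq_nonneg (a ^ 2 + b ^ 2 - 1), sq_nonneg (a * b * (a ^ 2 + b ^ 2 - 1)), sq_nonneg a,
      sq_nonneg b]
  · rintro ⟨k, q, hm⟩
    -- lifted identity
    have key : ∀ a b : ℝ, lft a b motzkin = ∑ i, (lft a b (q i)) ^ 2 := by
      intro a b
      rw [hm, map_sum]
      simp [map_pow]
    -- pointwise domination
    have bound : ∀ (a b : ℝ) (i : Fin k) (t : ℝ),
        ((lft a b (q i)).eval t) ^ 2 ≤ (lft a b motzkin).eval t := by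
      intro a b i t
      rw [key a b, Polynomial.eval_finset_sum]
      simp only [Polynomial.eval_pow]
      exact Finset.single_le_sum
        (f := fun j => (Polynomial.eval t (lft a b (q j))) ^ 2)
        (fun j _ => sq_nonneg _) (Finset.mem_univ i)
    -- degree bounds
    have d10 : ∀ i, (lft 1 0 (q i)).natDegree ≤ 0 := by
      intro i
      refine natDegree_le_of_sq_le (g := 1) (by simp) (fun t => ?_)
      have := bound 1 0 i t
      rwa [lft_motzkin_10] at this
    have d01 : ∀ i, (lft 0 1 (q i)).natDegree ≤ 0 := by
      intro i
      refine natDegree_le_of_sq_le (g := 1) (by simp) (fun t => ?_)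
      have := bound 0 1 i t
      rwa [lft_motzkin_01] at this
    have ddiag : ∀ i, (lft 1 1 (q i)).natDegree ≤ 3 := by
      intro i
      refine natDegree_le_of_sq_le
        (g := 2 * Polynomial.X ^ 6 - Polynomial.X ^ 4 + 1) (by simpa using deg6) (fun t => ?_)
      have := bound 1 1 i t
      rwa [lft_motzkin_diag] at this
    have danti : ∀ i, (lft 1 (-1) (q i)).natDegree ≤ 3 := by
      intro i
      refine natDegree_le_of_sq_le
        (g := 2 * Polynomial.X ^ 6 - Polynomial.X ^ 4 + 1) (by simpa using deg6) (fun t => ?_)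
      have := bound 1 (-1) i t
      rwa [lft_motzkin_anti] at this
    -- coefficient vanishing
    have c10 : ∀ (i : Fin k) (n : ℕ), 1 ≤ n → MvPolynomial.coeff (msg n 0) (q i) = 0 := by
      intro i n hn
      rw [← lft10_coeff]
      exact Polynomial.coeff_eq_zero_of_natDegree_lt (by have := d10 i; omega)
    have c01 : ∀ (i : Fin k) (n : ℕ), 1 ≤ n → MvPolynomial.coeff (msg 0 n) (q i) = 0 := by
      intro i n hn
      rw [← lft01_coeff]
      exact Polynomial.coeff_eq_zero_of_natDegree_lt (by have := d01 i; omega)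
    have c22 : ∀ i : Fin k, MvPolynomial.coeff (msg 2 2) (q i) = 0 := by
      intro i
      have h4 := coeff4_add (q i) (c10 i 4 (by norm_num)) (c01 i 4 (by norm_num))
      have hz1 : (lft 1 1 (q i)).coeff 4 = 0 :=
        Polynomial.coeff_eq_zero_of_natDegree_lt (by have := ddiag i; omega)
      have hz2 : (lft 1 (-1) (q i)).coeff 4 = 0 :=
        Polynomial.coeff_eq_zero_of_natDegree_lt (by have := danti i; omega)
      rw [hz1, hz2] at h4
      linarith
    -- evaluate the (2,2) coefficient of the SOS identity
    have hc := congrArg (MvPolynomial.coeff (msg 2 2)) hm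
    rw [coeff_motzkin_22, MvPolynomial.coeff_sum] at hc
    have hsq : ∀ i : Fin k, MvPolynomial.coeff (msg 2 2) ((q i) ^ 2)
        = (MvPolynomial.coeff (msg 1 1) (q i)) ^ 2 := fun i =>
      coeff22_sq (q i) (c10 i 1 le_rfl) (c01 i 1 le_rfl)
        (c10 i 2 (by norm_num)) (c01 i 2 (by norm_num)) (c22 i)
    rw [Finset.sum_congr rfl (fun i _ => hsq i)] at hc
    have hnn : (0:ℝ) ≤ ∑ i, (MvPolynomial.coeff (msg 1 1) (q i)) ^ 2 :=
      Finset.sum_nonneg (fun i _ => sq_nonneg _)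
    linarith
end

section
/- There is no probability measure μ on ℝ² satisfying simultaneously ∫ x⁴y² dμ(x,y) = 17, ∫ x²y⁴ dμ(x,y) = 17, and ∫ x²y² dμ(x,y) = 66. (Indeed, since X⁴Y² + X²Y⁴ − X²Y² + 1 ≥ 0 on ℝ², any probability measure with ∫x⁴y² dμ = 17 and ∫x²y⁴ dμ = 17 must satisfy ∫x²y² dμ ≤ 35; hence the positive semidefinite matrix Z_e of the paper, which prescribes these three moment values, is not the moment matrix of any probability measure.) -/
/-! The polynomial `x⁴y² + x²y⁴ − x²y² + 1` is nonnegative on `ℝ²`, so integrating it against a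
probability measure bounds the moment `∫ x²y²` by `∫ x⁴y² + ∫ x²y⁴ + 1 = 35 < 66`. -/

open MeasureTheory

open scoped ENNReal

-- With `s = |xy|`, `x² + y² ≥ 2s` bounds the difference of the two sides below by `2s³ − s² + 1 > 0`.
theorem sq_mul_sq_le_add_add_one (x y : ℝ) :
    x ^ 2 * y ^ 2 ≤ x ^ 4 * y ^ 2 + x ^ 2 * y ^ 4 + 1 := by
  nlinarith [mul_nonneg (sq_nonneg (x * y)) (sq_nonneg (x - y)),
    mul_nonneg (sq_nonneg (x * y)) (sq_nonneg (x + y)), sq_nonneg (x * y - 1),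
    sq_nonneg (x * y + 1)]

theorem ofReal_sq_mul_sq_le_add_add_one (x y : ℝ) :
    ENNReal.ofReal (x ^ 2 * y ^ 2) ≤
      ENNReal.ofReal (x ^ 4 * y ^ 2) + ENNReal.ofReal (x ^ 2 * y ^ 4) + 1 := by
  rw [← ENNReal.ofReal_add (by positivity) (by positivity), ← ENNReal.ofReal_one,
    ← ENNReal.ofReal_add (by positivity) zero_le_one]
  exact ENNReal.ofReal_le_ofReal (sq_mul_sq_le_add_add_one x y)

theorem lintegral_le_lintegral_add_lintegral_add_one {α : Type*} [MeasurableSpace α]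
    (μ : Measure α) [IsProbabilityMeasure μ] {f g h : α → ℝ≥0∞} (hf : Measurable f)
    (hle : ∀ a, h a ≤ f a + g a + 1) :
    ∫⁻ a, h a ∂μ ≤ ∫⁻ a, f a ∂μ + ∫⁻ a, g a ∂μ + 1 :=
  calc ∫⁻ a, h a ∂μ ≤ ∫⁻ a, (f a + g a + 1) ∂μ := lintegral_mono hle
    _ = ∫⁻ a, f a ∂μ + ∫⁻ a, g a ∂μ + 1 := by
      rw [lintegral_add_right _ measurable_const, lintegral_add_left hf, lintegral_const,
        measure_univ, mul_one]

/-- there is no probability measure `μ` on `ℝ²` with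
`∫ x⁴y² dμ = 17`, `∫ x²y⁴ dμ = 17` and `∫ x²y² dμ = 66` (the integrals of these
nonnegative functions being taken as Lebesgue integrals with values in `[0,∞]`). -/
theorem statement14 :
    ¬ ∃ μ : Measure (ℝ × ℝ), IsProbabilityMeasure μ ∧
      (∫⁻ p : ℝ × ℝ, ENNReal.ofReal (p.1 ^ 4 * p.2 ^ 2) ∂μ) = 17 ∧
      (∫⁻ p : ℝ × ℝ, ENNReal.ofReal (p.1 ^ 2 * p.2 ^ 4) ∂μ) = 17 ∧
      (∫⁻ p : ℝ × ℝ, ENNReal.ofReal (p.1 ^ 2 * p.2 ^ 2) ∂μ) = 66 := by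
  rintro ⟨μ, hμ, h42, h24, h22⟩
  have hbound := lintegral_le_lintegral_add_lintegral_add_one μ
    (by fun_prop : Measurable fun p : ℝ × ℝ => ENNReal.ofReal (p.1 ^ 4 * p.2 ^ 2))
    (fun p => ofReal_sq_mul_sq_le_add_add_one p.1 p.2)
  rw [h42, h24, h22] at hbound
  norm_num at hbound
end

section
/- Let m ≥ 1 and n : Fin m → ℕ, and for families x = (x_j) of vectors x_j ∈ ℂ^{n(j)} define v_x : (Π j, Fin (n j)) → ℂ by v_x(i) = ∏ⱼ x_j(i(j)), and the rank-one matrix X_x(s,t) := v_x(s)·conj(v_x(t)). If s, t, k, l ∈ (Π j, Fin (n j)) are multi-indices such that X_x(s,t) = X_x(k,l) for every family x of unit vectors (‖x_j‖ = 1 for all j), then s = k and t = l; i.e. distinct entries of the matrix (⊗ⱼx_j)(⊗ⱼx_j)† do not coincide as functions of the unit vectors x_j. -/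
open Complex Finset

/-- Key single-coordinate lemma. -/
private lemma key17 {N : ℕ} (a b c d : Fin N)
    (h : ∀ w : Fin N → ℂ, w a * (starRingEnd ℂ) (w b) = w c * (starRingEnd ℂ) (w d)) :
    a = c ∧ b = d := by
  -- test with powers of 2
  have pow_test : ∀ e : ℕ → ℕ, 2 ^ (e a + e b) = 2 ^ (e c + e d) := by
    intro e
    have := h (fun i => ((2 ^ e (i : ℕ) : ℕ) : ℂ))
    simp only [map_natCast] at this
    have : ((2 ^ e a * 2 ^ e b : ℕ) : ℂ) = ((2 ^ e c * 2 ^ e d : ℕ) : ℂ) := by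
      push_cast
      exact_mod_cast this
    have := Nat.cast_inj.mp this
    rwa [← pow_add, ← pow_add] at this
  have h1 : (a : ℕ) + b = (c : ℕ) + d :=
    Nat.pow_right_injective le_rfl (pow_test id)
  have h2 : (a : ℕ) ^ 2 + (b : ℕ) ^ 2 = (c : ℕ) ^ 2 + (d : ℕ) ^ 2 :=
    Nat.pow_right_injective le_rfl (pow_test (fun x => x ^ 2))
  have e1 : (a : ℚ) + b = (c : ℚ) + d := by exact_mod_cast h1
  have e2 : (a : ℚ) ^ 2 + (b : ℚ) ^ 2 = (c : ℚ) ^ 2 + (d : ℚ) ^ 2 := by exact_mod_cast h2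
  have hmul : ((a : ℚ) - c) * ((a : ℚ) - d) = 0 := by
    linear_combination (((a : ℚ) - b - c - d) / 2) * e1 + (1 / 2) * e2
  have hval : (a : ℕ) = c ∨ (a : ℕ) = d := by
    rcases mul_eq_zero.mp hmul with h' | h'
    · left; exact_mod_cast sub_eq_zero.mp h'
    · right; exact_mod_cast sub_eq_zero.mp h'
  rcases hval with hac | had
  · have hac' : a = c := Fin.val_injective hac
    have : (b : ℕ) = d := by omega
    exact ⟨hac', Fin.val_injective this⟩
  · have had' : a = d := Fin.val_injective had
    have hbc : b = c := Fin.val_injective (by omega)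
    by_cases hab : a = b
    · -- all four equal
      subst had' hbc hab
      exact ⟨rfl, rfl⟩
    · -- contradiction via phase test
      exfalso
      have hI := h (fun i => if i = a then Complex.I else 1)
      rw [← hbc, ← had'] at hI
      simp only [if_pos rfl, if_neg (show ¬ b = a from fun e => hab e.symm),
        Complex.conj_I, map_one, one_mul, mul_one] at hI
      rw [Complex.ext_iff] at hI
      norm_num at hI

/-- if two entries `(s,t)` and `(k,l)` of the rank-one matrix
`(⊗ⱼ xⱼ)(⊗ⱼ xⱼ)†` coincide as functions of the family of unit vectors `xⱼ`,
then `s = k` and `t = l`. -/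
theorem statement17 (m : ℕ) (hm : 1 ≤ m) (n : Fin m → ℕ)
    (s t k l : ∀ j, Fin (n j))
    (h : ∀ x : ∀ j, Fin (n j) → ℂ, (∀ j, ∑ a, Complex.normSq (x j a) = 1) →
      (∏ j, x j (s j)) * (starRingEnd ℂ) (∏ j, x j (t j)) =
        (∏ j, x j (k j)) * (starRingEnd ℂ) (∏ j, x j (l j))) :
    s = k ∧ t = l := by
  -- Step 1: remove the normalization hypothesis by homogeneity
  have h' : ∀ y : ∀ j, Fin (n j) → ℂ,
      (∏ j, y j (s j)) * (starRingEnd ℂ) (∏ j, y j (t j)) =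
        (∏ j, y j (k j)) * (starRingEnd ℂ) (∏ j, y j (l j)) := by
    intro y
    by_cases hz : ∀ j, ∃ a, y j a ≠ 0
    · -- all coordinates nonzero: normalize
      set r : Fin m → ℝ := fun j => Real.sqrt (∑ a, Complex.normSq (y j a)) with hr
      have hsumpos : ∀ j, 0 < ∑ a, Complex.normSq (y j a) := by
        intro j
        obtain ⟨a, ha⟩ := hz j
        exact Finset.sum_pos' (fun i _ => Complex.normSq_nonneg _)
          ⟨a, Finset.mem_univ a, Complex.normSq_pos.mpr ha⟩
      have hrpos : ∀ j, 0 < r j := fun j => Real.sqrt_pos.mpr (hsumpos j)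
      have hrsq : ∀ j, r j * r j = ∑ a, Complex.normSq (y j a) := fun j =>
        Real.mul_self_sqrt (le_of_lt (hsumpos j))
      have hx := h (fun j a => y j a / (r j : ℂ)) (by
        intro j
        simp only [Complex.normSq_div, Complex.normSq_ofReal, ← Finset.sum_div]
        rw [hrsq j, div_self (ne_of_gt (hsumpos j))])
      have hprod : ∀ f : ∀ j, Fin (n j), (∏ j, y j (f j) / (r j : ℂ)) =
          (∏ j, y j (f j)) / (∏ j, (r j : ℂ)) := fun f => Finset.prod_div_distrib _ _
      rw [hprod s, hprod t, hprod k, hprod l] at hx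
      set R : ℂ := ∏ j, (r j : ℂ) with hR
      have hRne : R ≠ 0 := Finset.prod_ne_zero_iff.mpr fun j _ => by
        exact_mod_cast ne_of_gt (hrpos j)
      have hconjR : (starRingEnd ℂ) R = R := by
        rw [hR, map_prod]
        exact Finset.prod_congr rfl fun j _ => Complex.conj_ofReal _
      rw [map_div₀, map_div₀, hconjR] at hx
      field_simp at hx
      simp only [map_prod] at hx ⊢
      linear_combination hx
    · -- some coordinate is identically zero: both sides vanish
      push_neg at hz
      obtain ⟨j, hj⟩ := hz
      have hs : (∏ j', y j' (s j')) = 0 :=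
        Finset.prod_eq_zero (Finset.mem_univ j) (hj _)
      have hk : (∏ j', y j' (k j')) = 0 :=
        Finset.prod_eq_zero (Finset.mem_univ j) (hj _)
      rw [hs, hk, zero_mul, zero_mul]
  -- Step 2: per-coordinate reduction
  have key : ∀ j₀ : Fin m, s j₀ = k j₀ ∧ t j₀ = l j₀ := by
    intro j₀
    apply key17
    intro w
    have := h' (Function.update (fun j (_ : Fin (n j)) => (1 : ℂ)) j₀ w)
    have hup : ∀ (f : ∀ j, Fin (n j)),
        (∏ j, Function.update (fun j (_ : Fin (n j)) => (1 : ℂ)) j₀ w j (f j)) = w (f j₀) := by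
      intro f
      rw [Fintype.prod_eq_single j₀]
      · rw [Function.update_self]
      · intro j hj
        rw [Function.update_of_ne hj]
    rwa [hup, hup, hup, hup] at this
  exact ⟨funext fun j => (key j).1, funext fun j => (key j).2⟩
end
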